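/- arXiv:1901.07825 — 7 statements merged into one kernel-verified Lean document; each statement's English description precedes it below -/
import Mathlib

section
/- Let n ≥ 1 and T = {0,1,…,⌊n/2⌋}. A vector x ∈ ℝ^n lies in PP(n) if and only if there exist reals (w_t)_{t∈T} and (z_{t,i})_{t∈T, i∈[n]} such that: Σ_{t∈T} w_t = 1; 0 ≤ w_t ≤ 1 for each t ∈ T; Σ_{t∈T} z_{t,i} = x_i for each i ∈ [n]; Σ_{i∈[n]} z_{t,i} = (2t+1)·w_t for each t ∈ T; and 0 ≤ z_{t,i} ≤ w_t for each t ∈ T and i ∈ [n]. -/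
open Finset

/-- Hypersimplex integrality: a point of `[0,1]^n` with integer coordinate sum `k`
lies in the convex hull of the 0/1 vectors of sum `k`.  Induction on the number of
fractional coordinates. -/
lemma hypersimplex_aux (n : ℕ) : ∀ (N : ℕ) (k : ℕ) (y : Fin n → ℝ),
    (univ.filter fun i => y i ≠ 0 ∧ y i ≠ 1).card ≤ N →
    (∀ i, 0 ≤ y i ∧ y i ≤ 1) → ∑ i, y i = (k : ℝ) →
    y ∈ convexHull ℝ {v : Fin n → ℝ | (∀ i, v i = 0 ∨ v i = 1) ∧ ∑ i, v i = (k : ℝ)} := by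
  intro N
  induction N with
  | zero =>
    intro k y hcard hy hsum
    apply subset_convexHull
    refine ⟨fun i => ?_, hsum⟩
    by_contra h
    push_neg at h
    have : i ∈ univ.filter fun i => y i ≠ 0 ∧ y i ≠ 1 := by
      simp [h.1, h.2]
    have := card_pos.2 ⟨i, this⟩
    omega
  | succ N ih =>
    intro k y hcard hy hsum
    set F := univ.filter fun i => y i ≠ 0 ∧ y i ≠ 1 with hF
    rcases Nat.eq_zero_or_pos F.card with h0 | hpos
    · exact ih k y (by rw [← hF]; omega) hy hsum
    obtain ⟨i, hiF⟩ := card_pos.1 hpos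
    have hi : y i ≠ 0 ∧ y i ≠ 1 := by simpa [hF] using hiF
    -- there must be a second fractional coordinate
    have h2 : ∃ j ∈ F, j ≠ i := by
      by_contra h
      push_neg at h
      -- then all other coordinates are 0 or 1, so y i is an integer
      have hothers : ∀ j ∈ univ.erase i, y j = 0 ∨ y j = 1 := by
        intro j hj
        rcases mem_erase.1 hj with ⟨hji, _⟩
        by_contra hc
        push_neg at hc
        exact hji (h j (by simp [hF, hc.1, hc.2]))
      have hsum' : ∑ j ∈ univ.erase i, y j =
          ((univ.erase i).filter fun j => y j = 1).card := by
        rw [Finset.card_filter]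
        push_cast
        apply Finset.sum_congr rfl
        intro j hj
        rcases hothers j hj with h' | h' <;> simp [h']
      have hyi : y i = (k : ℝ) - ((univ.erase i).filter fun j => y j = 1).card := by
        have := Finset.add_sum_erase univ y (mem_univ i)
        rw [← hsum', ] at *
        linarith [hsum, this]
      have h0' : (0:ℝ) < y i := lt_of_le_of_ne (hy i).1 (Ne.symm hi.1)
      have h1' : y i < 1 := lt_of_le_of_ne (hy i).2 hi.2
      set m := ((univ.erase i).filter fun j => y j = 1).card
      have hz0 : (0:ℝ) < (k : ℤ) - (m : ℤ) := by push_cast; rw [← hyi] at *; linarith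
      have hz1 : ((k : ℤ) - (m : ℤ) : ℝ) < 1 := by push_cast; rw [← hyi] at *; linarith
      have : (0:ℤ) < (k : ℤ) - m := by exact_mod_cast hz0
      have : ((k : ℤ) - m) < 1 := by exact_mod_cast hz1
      omega
    obtain ⟨j, hjF, hji⟩ := h2
    have hj : y j ≠ 0 ∧ y j ≠ 1 := by simpa [hF] using hjF
    have hyi0 : 0 < y i := lt_of_le_of_ne (hy i).1 (Ne.symm hi.1)
    have hyi1 : y i < 1 := lt_of_le_of_ne (hy i).2 hi.2
    have hyj0 : 0 < y j := lt_of_le_of_ne (hy j).1 (Ne.symm hj.1)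
    have hyj1 : y j < 1 := lt_of_le_of_ne (hy j).2 hj.2
    set a := min (1 - y i) (y j) with ha
    set b := min (y i) (1 - y j) with hb
    have ha0 : 0 < a := lt_min (by linarith) hyj0
    have hb0 : 0 < b := lt_min hyi0 (by linarith)
    set yp : Fin n → ℝ := fun m => if m = i then y i + a else if m = j then y j - a else y m
      with hyp
    set ym : Fin n → ℝ := fun m => if m = i then y i - b else if m = j then y j + b else y m
      with hym
    have hij : i ≠ j := hji.symm
    have haub1 : a ≤ 1 - y i := min_le_left _ _
    have haub2 : a ≤ y j := min_le_right _ _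
    have hbub1 : b ≤ y i := min_le_left _ _
    have hbub2 : b ≤ 1 - y j := min_le_right _ _
    -- bounds
    have hypb : ∀ m, 0 ≤ yp m ∧ yp m ≤ 1 := by
      intro m
      simp only [hyp]
      split_ifs with h1 h2
      · constructor <;> linarith
      · constructor <;> linarith
      · exact hy m
    have hymb : ∀ m, 0 ≤ ym m ∧ ym m ≤ 1 := by
      intro m
      simp only [hym]
      split_ifs with h1 h2
      · constructor <;> linarith
      · constructor <;> linarith
      · exact hy m
    -- sums
    have hsump : ∑ m, yp m = (k : ℝ) := by
      have he : ∀ m, yp m = y m + (if m = i then a else 0) - (if m = j then a else 0) := by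
        intro m
        simp only [hyp]
        split_ifs with h1 h2
        · exact absurd (h1 ▸ h2 : (i:Fin n) = j) hij
        · subst h1; ring
        · rename_i h3; subst h3; ring
        · ring
      simp only [he, Finset.sum_sub_distrib, Finset.sum_add_distrib,
        Finset.sum_ite_eq' Finset.univ, Finset.mem_univ, if_true, hsum]
      ring
    have hsumm : ∑ m, ym m = (k : ℝ) := by
      have he : ∀ m, ym m = y m - (if m = i then b else 0) + (if m = j then b else 0) := by
        intro m
        simp only [hym]
        split_ifs with h1 h2
        · exact absurd (h1 ▸ h2 : (i:Fin n) = j) hij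
        · subst h1; ring
        · rename_i h3; subst h3; ring
        · ring
      simp only [he, Finset.sum_sub_distrib, Finset.sum_add_distrib,
        Finset.sum_ite_eq' Finset.univ, Finset.mem_univ, if_true, hsum]
      ring
    -- fractional counts decrease
    have hcardp : (univ.filter fun m => yp m ≠ 0 ∧ yp m ≠ 1).card ≤ N := by
      rcases le_total (1 - y i) (y j) with hc | hc
      · have hai : a = 1 - y i := min_eq_left hc
        have hsub : (univ.filter fun m => yp m ≠ 0 ∧ yp m ≠ 1) ⊆ F.erase i := by
          intro m hm
          simp only [mem_filter, mem_univ, true_and] at hm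
          rcases eq_or_ne m i with rfl | hmi
          · exact absurd (by simp [hyp, hai]) hm.2
          rcases eq_or_ne m j with rfl | hmj
          · exact mem_erase.2 ⟨hmi, hjF⟩
          · refine mem_erase.2 ⟨hmi, ?_⟩
            have : yp m = y m := by simp [hyp, hmi, hmj]
            rw [this] at hm
            simp [hF, hm.1, hm.2]
        calc (univ.filter fun m => yp m ≠ 0 ∧ yp m ≠ 1).card ≤ (F.erase i).card :=
              card_le_card hsub
          _ = F.card - 1 := card_erase_of_mem hiF
          _ ≤ N := by omega
      · have hai : a = y j := min_eq_right hc
        have hsub : (univ.filter fun m => yp m ≠ 0 ∧ yp m ≠ 1) ⊆ F.erase j := by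
          intro m hm
          simp only [mem_filter, mem_univ, true_and] at hm
          rcases eq_or_ne m j with rfl | hmj
          · exact absurd (by simp [hyp, hai, hij.symm]) hm.1
          rcases eq_or_ne m i with rfl | hmi
          · exact mem_erase.2 ⟨hij, hiF⟩
          · refine mem_erase.2 ⟨hmj, ?_⟩
            have : yp m = y m := by simp [hyp, hmi, hmj]
            rw [this] at hm
            simp [hF, hm.1, hm.2]
        calc (univ.filter fun m => yp m ≠ 0 ∧ yp m ≠ 1).card ≤ (F.erase j).card :=
              card_le_card hsub
          _ = F.card - 1 := card_erase_of_mem hjF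
          _ ≤ N := by omega
    have hcardm : (univ.filter fun m => ym m ≠ 0 ∧ ym m ≠ 1).card ≤ N := by
      rcases le_total (y i) (1 - y j) with hc | hc
      · have hbi : b = y i := min_eq_left hc
        have hsub : (univ.filter fun m => ym m ≠ 0 ∧ ym m ≠ 1) ⊆ F.erase i := by
          intro m hm
          simp only [mem_filter, mem_univ, true_and] at hm
          rcases eq_or_ne m i with rfl | hmi
          · exact absurd (by simp [hym, hbi]) hm.1
          rcases eq_or_ne m j with rfl | hmj
          · exact mem_erase.2 ⟨hmi, hjF⟩
          · refine mem_erase.2 ⟨hmi, ?_⟩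
            have : ym m = y m := by simp [hym, hmi, hmj]
            rw [this] at hm
            simp [hF, hm.1, hm.2]
        calc (univ.filter fun m => ym m ≠ 0 ∧ ym m ≠ 1).card ≤ (F.erase i).card :=
              card_le_card hsub
          _ = F.card - 1 := card_erase_of_mem hiF
          _ ≤ N := by omega
      · have hbi : b = 1 - y j := min_eq_right hc
        have hsub : (univ.filter fun m => ym m ≠ 0 ∧ ym m ≠ 1) ⊆ F.erase j := by
          intro m hm
          simp only [mem_filter, mem_univ, true_and] at hm
          rcases eq_or_ne m j with rfl | hmj
          · exact absurd (by simp [hym, hbi, hij.symm]) hm.2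
          rcases eq_or_ne m i with rfl | hmi
          · exact mem_erase.2 ⟨hij, hiF⟩
          · refine mem_erase.2 ⟨hmj, ?_⟩
            have : ym m = y m := by simp [hym, hmi, hmj]
            rw [this] at hm
            simp [hF, hm.1, hm.2]
        calc (univ.filter fun m => ym m ≠ 0 ∧ ym m ≠ 1).card ≤ (F.erase j).card :=
              card_le_card hsub
          _ = F.card - 1 := card_erase_of_mem hjF
          _ ≤ N := by omega
    have hp := ih k yp hcardp hypb hsump
    have hm := ih k ym hcardm hymb hsumm
    have hab : 0 < a + b := by linarith
    have hcomb : y = (b / (a + b)) • yp + (a / (a + b)) • ym := by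
      funext m
      simp only [Pi.add_apply, Pi.smul_apply, smul_eq_mul, hyp, hym]
      split_ifs with h1 h2
      · subst h1; field_simp; ring
      · subst h2; field_simp; ring
      · field_simp; ring
    rw [hcomb]
    exact (convex_convexHull ℝ _) hp hm (by positivity) (by positivity)
      (by field_simp; ring)

lemma hypersimplex_mem {n k : ℕ} {y : Fin n → ℝ}
    (hy : ∀ i, 0 ≤ y i ∧ y i ≤ 1) (hsum : ∑ i, y i = (k : ℝ)) :
    y ∈ convexHull ℝ {v : Fin n → ℝ | (∀ i, v i = 0 ∨ v i = 1) ∧ ∑ i, v i = (k : ℝ)} :=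
  hypersimplex_aux n _ k y le_rfl hy hsum



/-- The parity polytope `PP(n)`: the convex hull of the 0/1 vectors of length `n`
whose coordinate sum is odd. -/
def parityPolytope (n : ℕ) : Set (Fin n → ℝ) :=
  convexHull ℝ
    {x : Fin n → ℝ | (∀ k, x k = 0 ∨ x k = 1) ∧ ∃ s : ℕ, Odd s ∧ ∑ k, x k = (s : ℝ)}

/-- Yannakakis' lift of the parity polytope.  With `T = {0,…,⌊n/2⌋}`, a
vector `x ∈ ℝ^n` lies in `PP(n)` iff there are reals `(w_t)` and `(z_{t,i})` with
`Σ_t w_t = 1`, `0 ≤ w_t ≤ 1`, `Σ_t z_{t,i} = x_i`, `Σ_i z_{t,i} = (2t+1) w_t` and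
`0 ≤ z_{t,i} ≤ w_t`. -/
theorem statement3 (n : ℕ) (hn : 1 ≤ n) (x : Fin n → ℝ) :
    x ∈ parityPolytope n ↔
      ∃ (w : Fin (n / 2 + 1) → ℝ) (z : Fin (n / 2 + 1) → Fin n → ℝ),
        (∑ t, w t = 1) ∧
        (∀ t, 0 ≤ w t ∧ w t ≤ 1) ∧
        (∀ i, ∑ t, z t i = x i) ∧
        (∀ t, ∑ i, z t i = ((2 * (t : ℕ) + 1 : ℕ) : ℝ) * w t) ∧
        (∀ t i, 0 ≤ z t i ∧ z t i ≤ w t) := by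
  classical
  constructor
  · intro hx
    rw [parityPolytope, _root_.convexHull_eq] at hx
    obtain ⟨ι, t, lam, v, hlam0, hlam1, hv, hcm⟩ := hx
    rw [Finset.centerMass_eq_of_sum_1 _ _ hlam1] at hcm
    set σ : ι → ℕ := fun j =>
      if h : ∃ s : ℕ, Odd s ∧ ∑ k, v j k = (s:ℝ) then h.choose else 0 with hσ
    have hσ' : ∀ j ∈ t, Odd (σ j) ∧ ∑ k, v j k = (σ j : ℝ) := by
      intro j hj
      have h := (hv j hj).2
      simp only [hσ, dif_pos h]
      exact ⟨h.choose_spec.1, h.choose_spec.2⟩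
    have hσle : ∀ j ∈ t, σ j ≤ n := by
      intro j hj
      have h1 := (hσ' j hj).2
      have h2 : (σ j : ℝ) ≤ n := by
        rw [← h1]
        calc ∑ k, v j k ≤ ∑ _k : Fin n, (1:ℝ) :=
              Finset.sum_le_sum (fun k _ => by
                rcases (hv j hj).1 k with h | h <;> simp [h])
          _ = n := by simp
      exact_mod_cast h2
    set τ : ι → Fin (n/2+1) := fun j => ⟨min (σ j / 2) (n/2), by omega⟩ with hτ
    have hτ' : ∀ j ∈ t, 2 * ((τ j : ℕ)) + 1 = σ j := by
      intro j hj
      obtain ⟨hodd, _⟩ := hσ' j hj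
      obtain ⟨c, hc⟩ := hodd
      have h1 : σ j / 2 ≤ n / 2 := Nat.div_le_div_right (hσle j hj)
      simp only [hτ]
      omega
    refine ⟨fun t' => ∑ j ∈ t.filter (fun j => τ j = t'), lam j,
            fun t' i => ∑ j ∈ t.filter (fun j => τ j = t'), lam j * v j i,
            ?_, ?_, ?_, ?_, ?_⟩
    · rw [Finset.sum_fiberwise]; exact hlam1
    · intro t'
      constructor
      · exact Finset.sum_nonneg fun j hj => hlam0 j (Finset.mem_filter.1 hj).1
      · calc ∑ j ∈ t.filter (fun j => τ j = t'), lam j ≤ ∑ j ∈ t, lam j :=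
              Finset.sum_le_sum_of_subset_of_nonneg (Finset.filter_subset _ _)
                (fun j hj _ => hlam0 j hj)
          _ = 1 := hlam1
    · intro i
      rw [Finset.sum_fiberwise]
      have := congrFun hcm i
      simpa [Finset.sum_apply] using this
    · intro t'
      rw [Finset.sum_comm, Finset.mul_sum]
      apply Finset.sum_congr rfl
      intro j hj
      rcases Finset.mem_filter.1 hj with ⟨hjt, hjτ⟩
      rw [← Finset.mul_sum, (hσ' j hjt).2]
      have : ((2 * (t' : ℕ) + 1 : ℕ) : ℝ) = (σ j : ℝ) := by
        rw [← hτ' j hjt, hjτ]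
      rw [this]; ring
    · intro t' i
      constructor
      · refine Finset.sum_nonneg fun j hj => ?_
        rcases Finset.mem_filter.1 hj with ⟨hjt, _⟩
        have h0 : 0 ≤ v j i := by rcases (hv j hjt).1 i with h | h <;> simp [h]
        exact mul_nonneg (hlam0 j hjt) h0
      · refine Finset.sum_le_sum fun j hj => ?_
        rcases Finset.mem_filter.1 hj with ⟨hjt, _⟩
        have h1 : v j i ≤ 1 := by rcases (hv j hjt).1 i with h | h <;> simp [h]
        calc lam j * v j i ≤ lam j * 1 :=
              mul_le_mul_of_nonneg_left h1 (hlam0 j hjt)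
          _ = lam j := mul_one _
  · rintro ⟨w, z, hw1, hwb, hzx, hzs, hzb⟩
    set P := Finset.univ.filter (fun t => 0 < w t) with hP
    have hzero : ∀ t ∉ P, w t = 0 := by
      intro t ht
      simp only [hP, Finset.mem_filter, Finset.mem_univ, true_and, not_lt] at ht
      exact le_antisymm ht (hwb t).1
    have hzzero : ∀ t ∉ P, ∀ i, z t i = 0 := by
      intro t ht i
      have := (hzb t i)
      have h0 := hzero t ht
      linarith [this.1, this.2]
    have hwP : ∑ t ∈ P, w t = 1 := by
      rw [← hw1]
      exact (Finset.sum_subset (Finset.subset_univ P)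
        (fun t _ ht => hzero t ht)).symm ▸ rfl
    have hmem : ∀ t ∈ P, (w t)⁻¹ • z t ∈ parityPolytope n := by
      intro t ht
      have hwt : 0 < w t := by
        simpa [hP] using (Finset.mem_filter.1 ht).2
      have hbnd : ∀ i, 0 ≤ ((w t)⁻¹ • z t) i ∧ ((w t)⁻¹ • z t) i ≤ 1 := by
        intro i
        refine ⟨mul_nonneg (inv_nonneg.2 hwt.le) (hzb t i).1, ?_⟩
        rw [Pi.smul_apply, smul_eq_mul, ← div_eq_inv_mul]
        exact (div_le_one hwt).2 (hzb t i).2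
      have hs : ∑ i, ((w t)⁻¹ • z t) i = ((2 * (t : ℕ) + 1 : ℕ) : ℝ) := by
        simp only [Pi.smul_apply, smul_eq_mul, ← Finset.mul_sum, hzs t]
        field_simp
      have hmem' := hypersimplex_mem hbnd hs
      refine convexHull_mono ?_ hmem'
      rintro v ⟨hv01, hvs⟩
      exact ⟨hv01, ⟨2 * (t : ℕ) + 1, ⟨(t : ℕ), by ring⟩, hvs⟩⟩
    have hxe : x = ∑ t ∈ P, w t • ((w t)⁻¹ • z t) := by
      funext i
      rw [Finset.sum_apply]
      rw [← hzx i]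
      rw [← Finset.sum_subset (Finset.subset_univ P) (fun t _ ht => hzzero t ht i)]
      apply Finset.sum_congr rfl
      intro t ht
      have hwt : 0 < w t := by
        simpa [hP] using (Finset.mem_filter.1 ht).2
      simp only [Pi.smul_apply, smul_eq_mul]
      field_simp
    rw [hxe]
    exact (convex_convexHull ℝ _).sum_mem (fun t _ => (hwb t).1) hwP hmem
end

section
/- Let n ≥ 1 and let q be an integer with 0 ≤ q ≤ |n|−1. Let x_1,…,x_{n-1} ∈ {0,1} satisfy Σ_{k=1}^{n-1} x_k ≡ −1 (mod 2^q). Then there exists a unique x_n ∈ ℝ such that (x_1,…,x_n) ∈ PP(n,q); moreover this x_n lies in {0,1} and is the unique bit making the truncation ⌊2^{-q} Σ_{k=1}^n x_k⌋ odd. -/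
/-- The truncated parity polytope `PP(n,q)`: the convex hull of the 0/1 vectors of
length `n` with `⌊2^{-q} Σ x_k⌋` odd. -/
def truncParityPolytope (n q : ℕ) : Set (Fin n → ℝ) :=
  convexHull ℝ
    {x : Fin n → ℝ |
      (∀ k, x k = 0 ∨ x k = 1) ∧ ∃ s : ℕ, (∑ k, x k) = (s : ℝ) ∧ Odd (s / 2 ^ q)}

/-- Let `n = m + 1 ≥ 1`, `0 ≤ q ≤ |n| - 1` (where `|n| = Nat.size n` is the
number of bits of `n`), and let `x_1,…,x_{n-1} ∈ {0,1}` with `Σ_{k<n} x_k ≡ -1 (mod 2^q)`.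
Then there is a unique `x_n ∈ ℝ` with `(x_1,…,x_n) ∈ PP(n,q)`; moreover this `x_n` lies
in `{0,1}` and is the unique bit making the truncation `⌊2^{-q} Σ x_k⌋` odd. -/
theorem statement4 (m q : ℕ) (hq : q ≤ Nat.size (m + 1) - 1)
    (x : Fin m → ℝ) (hx : ∀ k, x k = 0 ∨ x k = 1)
    (hsum : ∃ s : ℕ, (∑ k, x k) = (s : ℝ) ∧ 2 ^ q ∣ (s + 1)) :
    (∃! v : ℝ, Fin.snoc x v ∈ truncParityPolytope (m + 1) q) ∧
    ∀ v : ℝ, Fin.snoc x v ∈ truncParityPolytope (m + 1) q →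
      (v = 0 ∨ v = 1) ∧
      (∃ s : ℕ, (∑ k, Fin.snoc x v k) = (s : ℝ) ∧ Odd (s / 2 ^ q)) ∧
      (∀ b : ℝ, (b = 0 ∨ b = 1) →
        (∃ s : ℕ, (∑ k, Fin.snoc x b k) = (s : ℝ) ∧ Odd (s / 2 ^ q)) → b = v) := by
  obtain ⟨s, hs, t, ht⟩ := hsum
  set p := 2 ^ q with hp
  have hp1 : 1 ≤ p := Nat.one_le_two_pow
  -- t ≥ 1
  obtain ⟨t', rfl⟩ : ∃ t'', t = t'' + 1 := by
    refine ⟨t - 1, ?_⟩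
    rcases t with _ | t
    · simp at ht
    · simp
  have key1 : s + 1 = t' * p + p := by rw [ht]; ring
  have hdiv1 : s / p = t' := by
    have hs2 : s = (p - 1) + t' * p := by omega
    rw [hs2, Nat.add_mul_div_right _ _ (by omega), Nat.div_eq_of_lt (by omega)]
    omega
  have hdiv2 : (s + 1) / p = t' + 1 := by
    rw [ht, Nat.mul_div_cancel_left _ (by omega)]
  set b₀ : ℕ := if Odd (t' + 1) then 1 else 0 with hb₀def
  have hb01 : b₀ = 0 ∨ b₀ = 1 := by rw [hb₀def]; split <;> simp
  have hodd : Odd ((s + b₀) / p) := by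
    by_cases h : Odd (t' + 1)
    · simp only [hb₀def, if_pos h]; rwa [hdiv2]
    · simp only [hb₀def, if_neg h]
      rw [Nat.add_zero, hdiv1]
      rcases Nat.even_or_odd t' with he | ho
      · exfalso
        apply h
        obtain ⟨a, ha⟩ := he
        exact ⟨a, by omega⟩
      · exact ho
  have huniqbit : ∀ j : ℕ, j ≤ 1 → Odd ((s + j) / p) → j = b₀ := by
    intro j hj ho
    interval_cases j
    · rw [Nat.add_zero, hdiv1] at ho
      have hno : ¬ Odd (t' + 1) := by
        rintro ⟨a, ha⟩
        obtain ⟨b, hb⟩ := ho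
        omega
      simp [hb₀def, hno]
    · rw [hdiv2] at ho
      simp [hb₀def, ho]
  -- sum of snoc
  have hsnocsum : ∀ v : ℝ, (∑ k, Fin.snoc x v k) = (s : ℝ) + v := by
    intro v
    rw [Fin.sum_univ_castSucc]
    simp [Fin.snoc_castSucc, Fin.snoc_last, hs]
  -- membership of the canonical point
  have memS : Fin.snoc x (b₀ : ℝ) ∈
      {y : Fin (m+1) → ℝ |
        (∀ k, y k = 0 ∨ y k = 1) ∧ ∃ s' : ℕ, (∑ k, y k) = (s' : ℝ) ∧ Odd (s' / 2 ^ q)} := by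
    refine ⟨?_, s + b₀, ?_, hodd⟩
    · intro k
      refine Fin.lastCases ?_ ?_ k
      · simp only [Fin.snoc_last]
        rcases hb01 with h | h <;> simp [h]
      · intro i; simp only [Fin.snoc_castSucc]; exact hx i
    · rw [hsnocsum]; push_cast; ring
  have hmem : Fin.snoc x (b₀ : ℝ) ∈ truncParityPolytope (m + 1) q :=
    subset_convexHull ℝ _ memS
  -- key uniqueness via affine halfspaces
  have key : ∀ v : ℝ, Fin.snoc x v ∈ truncParityPolytope (m + 1) q → v = (b₀ : ℝ) := by
    intro v hv
    set c : Fin m → ℝ := fun k => 1 - 2 * x k with hc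
    have main : ∀ ε : ℝ, ε = 1 ∨ ε = -1 → 0 ≤ ε * (v - (b₀ : ℝ)) := by
      intro ε hε
      set f : (Fin (m+1) → ℝ) → ℝ :=
        fun y => ε * y (Fin.last m) + ∑ k : Fin m, c k * y k.castSucc with hf
      have hlin : IsLinearMap ℝ f := by
        constructor
        · intro a b
          simp only [hf, Pi.add_apply, mul_add, Finset.sum_add_distrib]
          ring
        · intro r a
          simp only [hf, Pi.smul_apply, smul_eq_mul, Finset.mul_sum, mul_add]
          congr 1
          · ring
          · exact Finset.sum_congr rfl fun i _ => by ring
      have hconv : Convex ℝ {y : Fin (m+1) → ℝ | ε * (b₀ : ℝ) + ∑ k, c k * x k ≤ f y} :=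
        convex_halfSpace_ge hlin _
      have hsub : truncParityPolytope (m + 1) q ⊆
          {y : Fin (m+1) → ℝ | ε * (b₀ : ℝ) + ∑ k, c k * x k ≤ f y} := by
        apply convexHull_min _ hconv
        rintro y ⟨hy01, s', hys, hyodd⟩
        -- pointwise terms nonneg
        have hterm : ∀ k : Fin m, 0 ≤ c k * (y k.castSucc - x k) ∧
            (y k.castSucc ≠ x k → c k * (y k.castSucc - x k) = 1) := by
          intro k
          rcases hx k with h1 | h1 <;> rcases hy01 k.castSucc with h2 | h2 <;>
            simp [hc, h1, h2] <;> norm_num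
        have hεbound : -1 ≤ ε * (y (Fin.last m) - (b₀ : ℝ)) := by
          rcases hε with rfl | rfl <;> rcases hy01 (Fin.last m) with h | h <;>
            rcases hb01 with hb | hb <;> simp [h, hb] <;> norm_num
        have goal0 : 0 ≤ ε * (y (Fin.last m) - (b₀ : ℝ)) +
            ∑ k : Fin m, c k * (y k.castSucc - x k) := by
          by_cases hagree : ∀ k : Fin m, y k.castSucc = x k
          · have hsum0 : ∑ k : Fin m, c k * (y k.castSucc - x k) = 0 := by
              apply Finset.sum_eq_zero
              intro k _
              rw [hagree k]; ring
            -- determine last coordinate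
            have hylast : y (Fin.last m) = (b₀ : ℝ) := by
              have hsy : (∑ k, y k) = (s : ℝ) + y (Fin.last m) := by
                rw [Fin.sum_univ_castSucc, ← hs]
                congr 1
                exact Finset.sum_congr rfl fun k _ => hagree k
              rcases hy01 (Fin.last m) with h | h
              · have : (s' : ℝ) = (s : ℝ) := by rw [← hys, hsy, h]; ring
                have hss : s' = s := by exact_mod_cast this
                have := huniqbit 0 (by norm_num) (by simpa [hss] using hyodd)
                rw [h, ← this]; simp
              · have : (s' : ℝ) = (s : ℝ) + 1 := by rw [← hys, hsy, h]
                have hss : s' = s + 1 := by exact_mod_cast this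
                have := huniqbit 1 (by norm_num) (by simpa [hss] using hyodd)
                rw [h, ← this]; simp
            rw [hylast, hsum0]; simp
          · push_neg at hagree
            obtain ⟨k₀, hk₀⟩ := hagree
            have h1 : (1 : ℝ) ≤ ∑ k : Fin m, c k * (y k.castSucc - x k) :=
              calc (1 : ℝ) = c k₀ * (y k₀.castSucc - x k₀) := ((hterm k₀).2 hk₀).symm
                _ ≤ _ := Finset.single_le_sum (f := fun k => c k * (y k.castSucc - x k))
                    (fun k _ => (hterm k).1) (Finset.mem_univ k₀)
            linarith
        have expand : f y - (ε * (b₀ : ℝ) + ∑ k, c k * x k) =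
            ε * (y (Fin.last m) - (b₀ : ℝ)) + ∑ k : Fin m, c k * (y k.castSucc - x k) := by
          simp only [hf, mul_sub, Finset.sum_sub_distrib]
          ring
        simp only [Set.mem_setOf_eq]
        linarith [goal0, expand.ge, expand.le]
      have := hsub hv
      simp only [Set.mem_setOf_eq, hf, Fin.snoc_last, Fin.snoc_castSucc] at this
      linarith
    have h1 := main 1 (Or.inl rfl)
    have h2 := main (-1) (Or.inr rfl)
    linarith
  constructor
  · exact ⟨(b₀ : ℝ), hmem, fun v hv => key v hv⟩
  · intro v hv
    have hvb := key v hv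
    subst hvb
    refine ⟨by rcases hb01 with h | h <;> simp [h], ⟨s + b₀, ?_, hodd⟩, ?_⟩
    · rw [hsnocsum]; push_cast; ring
    · rintro b hb ⟨s'', hsb, hodd''⟩
      rw [hsnocsum] at hsb
      rcases hb with rfl | rfl
      · have hss : s'' = s := by
          have : (s'' : ℝ) = (s : ℝ) := by rw [← hsb]; ring
          exact_mod_cast this
        have := huniqbit 0 (by norm_num) (by simpa [hss] using hodd'')
        rw [← this]; simp
      · have hss : s'' = s + 1 := by
          have : (s'' : ℝ) = (s : ℝ) + 1 := by rw [← hsb]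
          exact_mod_cast this
        have := huniqbit 1 (by norm_num) (by simpa [hss] using hodd'')
        rw [← this]; simp
end

section
/- Let n ≥ 1, let q be an integer with 0 ≤ q ≤ |n|−1, and let T = {0,…,⌊n/2^{q+1}⌋} × {0,…,2^q−1}. A vector x ∈ ℝ^n lies in PP(n,q) if and only if there exist reals (w_{t,r})_{(t,r)∈T} and (z_{t,r,i})_{(t,r)∈T, i∈[n]} such that: Σ_{(t,r)∈T} w_{t,r} = 1; 0 ≤ w_{t,r} ≤ 1 for each (t,r) ∈ T; Σ_{(t,r)∈T} z_{t,r,i} = x_i for each i ∈ [n]; Σ_{i∈[n]} z_{t,r,i} = (2^q(2t+1)+r)·w_{t,r} for each (t,r) ∈ T; and 0 ≤ z_{t,r,i} ≤ w_{t,r} for each (t,r) ∈ T and i ∈ [n]. -/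
/-!
The points of `[0,1]^ι` with integral coordinate sum `m` form the hypersimplex `Δ(ι, m)`.
Its extreme points are `0/1` vectors: a point with a fractional coordinate has a second one
(the coordinate sum is an integer), and moving a little mass between the two, in either
direction, stays in `Δ(ι, m)`. By Krein–Milman, `Δ(ι, m)` is the convex hull of its `0/1`
vectors.

A `0/1` vector of length `n` lies in `PP(n,q)` exactly when its coordinate sum is
`2^q(2t+1)+r` for some `(t,r) ∈ T`, so `PP(n,q)` is the convex hull of a union of
hypersimplices. The system of the theorem is Balas' extended formulation of such a hull, in
which `z_{t,r}` is `w_{t,r}` times a point of the hypersimplex of level `2^q(2t+1)+r`. The set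
it describes is convex and contains every vertex (all weight on the level of the vertex);
conversely, `x = Σ w_{t,r} • (z_{t,r} / w_{t,r})` over the `(t,r)` with
`w_{t,r} ≠ 0`.
-/

open Finset

theorem eq_zero_of_add_mem_of_sub_mem_of_mem_extremePoints {𝕜 E : Type*} [Field 𝕜]
    [LinearOrder 𝕜] [IsStrictOrderedRing 𝕜] [AddCommGroup E] [Module 𝕜 E] {A : Set E} {x d : E}
    (hx : x ∈ A.extremePoints 𝕜) (hadd : x + d ∈ A) (hsub : x - d ∈ A) : d = 0 := by
  simpa using hx.2 hadd hsub (mem_openSegment_add_sub x d)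

section Hypersimplex

variable {ι : Type*} [Fintype ι]

variable (ι) in
def hypersimplex (m : ℝ) : Set (ι → ℝ) :=
  Set.Icc 0 1 ∩ {y | ∑ i, y i = m}

theorem isCompact_hypersimplex (m : ℝ) : IsCompact (hypersimplex ι m) :=
  isCompact_Icc.inter_right <|
    isClosed_eq (continuous_finsetSum _ fun i _ => continuous_apply i) continuous_const

theorem convex_hypersimplex (m : ℝ) : Convex ℝ (hypersimplex ι m) :=
  (convex_Icc 0 1).inter <| convex_hyperplane
    ⟨fun y y' => by simp [sum_add_distrib], fun a y => by simp [mul_sum]⟩ m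

theorem add_mem_hypersimplex {m : ℝ} {y d : ι → ℝ} (hy : y ∈ hypersimplex ι m)
    (hd : ∀ k, |d k| ≤ y k ∧ |d k| ≤ 1 - y k) (hsum : ∑ k, d k = 0) :
    y + d ∈ hypersimplex ι m := by
  refine ⟨⟨fun k => ?_, fun k => ?_⟩, ?_⟩
  · have := neg_abs_le (d k); simp only [Pi.add_apply, Pi.zero_apply]; linarith [hd k]
  · have := le_abs_self (d k); simp only [Pi.add_apply, Pi.one_apply]; linarith [hd k]
  · simpa [sum_add_distrib, hsum] using hy.2

theorem exists_ne_fractional_of_sum_eq_natCast {m : ℕ} {y : ι → ℝ} (hs : ∑ i, y i = m)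
    {i : ι} (hi₀ : 0 < y i) (hi₁ : y i < 1) : ∃ j ≠ i, y j ≠ 0 ∧ y j ≠ 1 := by
  classical
  by_contra! h
  have hrest : ∑ j ∈ univ.erase i, y j = (#{j ∈ univ.erase i | y j = 1} : ℝ) := by
    rw [natCast_card_filter]
    refine sum_congr rfl fun j hj => ?_
    by_cases hj₁ : y j = 1
    · simp [hj₁]
    · simp [not_imp_comm.mp (h j (ne_of_mem_erase hj)) hj₁]
  rw [← add_sum_erase _ _ (mem_univ i), hrest] at hs
  set k := #{j ∈ univ.erase i | y j = 1}
  have hlt : k < m := by exact_mod_cast (by linarith : (k : ℝ) < m)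
  have hgt : m < k + 1 := by exact_mod_cast (by linarith : (m : ℝ) < k + 1)
  omega

theorem extremePoints_hypersimplex_subset (m : ℕ) :
    (hypersimplex ι m).extremePoints ℝ ⊆ {v | (∀ i, v i = 0 ∨ v i = 1) ∧ ∑ i, v i = m} := by
  classical
  intro y hy
  refine ⟨fun i => ?_, hy.1.2⟩
  by_contra! hfrac
  have hbounds : ∀ k, 0 ≤ y k ∧ y k ≤ 1 := fun k => ⟨hy.1.1.1 k, hy.1.1.2 k⟩
  have hi₀ : 0 < y i := (hbounds i).1.lt_of_ne' hfrac.1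
  have hi₁ : y i < 1 := (hbounds i).2.lt_of_ne hfrac.2
  obtain ⟨j, hji, hj⟩ := exists_ne_fractional_of_sum_eq_natCast hy.1.2 hi₀ hi₁
  have hj₀ : 0 < y j := (hbounds j).1.lt_of_ne' hj.1
  have hj₁ : y j < 1 := (hbounds j).2.lt_of_ne hj.2
  set ε := min (min (y i) (1 - y i)) (min (y j) (1 - y j))
  have hε : 0 < ε := lt_min (lt_min hi₀ (by linarith)) (lt_min hj₀ (by linarith))
  set d : ι → ℝ := Pi.single i ε - Pi.single j ε
  have hd : ∀ k, |d k| ≤ y k ∧ |d k| ≤ 1 - y k := by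
    intro k
    rcases eq_or_ne k i with rfl | hki
    · simp [d, hji, abs_of_pos hε, ε]
    rcases eq_or_ne k j with rfl | hkj
    · simp [d, hki, abs_of_pos hε, ε]
    · simp [d, hki, hkj, hbounds k]
  have hsum : ∑ k, d k = 0 := by simp [d]
  have hsub : y - d ∈ hypersimplex ι m := by
    rw [sub_eq_add_neg]
    exact add_mem_hypersimplex hy.1 (by simpa using hd) (by simp [hsum])
  have := congr_fun (eq_zero_of_add_mem_of_sub_mem_of_mem_extremePoints hy
    (add_mem_hypersimplex hy.1 hd hsum) hsub) i
  simp [d, hji.symm, hε.ne'] at this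

theorem hypersimplex_subset_convexHull (m : ℕ) :
    hypersimplex ι m ⊆ convexHull ℝ {v | (∀ i, v i = 0 ∨ v i = 1) ∧ ∑ i, v i = m} := by
  set V := {v : ι → ℝ | (∀ i, v i = 0 ∨ v i = 1) ∧ ∑ i, v i = m}
  have hV : V.Finite := (Set.Finite.pi fun _ => Set.toFinite {0, 1}).subset
    fun v hv i _ => hv.1 i
  calc hypersimplex ι m
      = closure (convexHull ℝ ((hypersimplex ι m).extremePoints ℝ)) :=
        (closure_convexHull_extremePoints (isCompact_hypersimplex _)
          (convex_hypersimplex _)).symm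
    _ ⊆ closure (convexHull ℝ V) :=
        closure_mono (convexHull_mono (extremePoints_hypersimplex_subset m))
    _ = convexHull ℝ V := (hV.isClosed_convexHull ℝ).closure_eq

theorem inv_smul_mem_hypersimplex {m w : ℝ} {z : ι → ℝ} (hw : 0 < w)
    (hz : ∀ i, 0 ≤ z i ∧ z i ≤ w) (hs : ∑ i, z i = m * w) : w⁻¹ • z ∈ hypersimplex ι m := by
  refine ⟨⟨fun i => ?_, fun i => ?_⟩, ?_⟩
  · exact smul_nonneg (inv_nonneg.2 hw.le) (hz i).1
  · simpa [inv_mul_le_one₀ hw] using (hz i).2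
  · simp [← mul_sum, hs, mul_comm m, hw.ne']

end Hypersimplex

section Lift

variable {ι τ : Type*} [Fintype ι] [Fintype τ]

/-- Balas' extended formulation of the convex hull of `⋃ p, hypersimplex ι (c p)`. -/
def hypersimplexUnionLift (c : τ → ℕ) : Set (ι → ℝ) :=
  {x | ∃ (w : τ → ℝ) (z : τ → ι → ℝ),
    (∑ p, w p = 1) ∧
    (∀ p, 0 ≤ w p ∧ w p ≤ 1) ∧
    (∀ i, ∑ p, z p i = x i) ∧
    (∀ p, ∑ i, z p i = (c p : ℝ) * w p) ∧
    (∀ p i, 0 ≤ z p i ∧ z p i ≤ w p)}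

theorem convex_hypersimplexUnionLift (c : τ → ℕ) :
    Convex ℝ (hypersimplexUnionLift (ι := ι) c) := by
  rintro x ⟨w₁, z₁, hw₁, hw₁01, hx₁, hs₁, hz₁⟩ y ⟨w₂, z₂, hw₂, hw₂01, hx₂, hs₂, hz₂⟩ a b ha hb hab
  refine ⟨a • w₁ + b • w₂, a • z₁ + b • z₂, ?_, fun p => ?_, fun i => ?_, fun p => ?_,
    fun p i => ?_⟩
  · simp [sum_add_distrib, ← mul_sum, hw₁, hw₂, hab]
  · have := hw₁01 p; have := hw₂01 p
    simp only [Pi.add_apply, Pi.smul_apply, smul_eq_mul]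
    constructor <;> nlinarith
  · simp [sum_add_distrib, ← mul_sum, hx₁, hx₂]
  · simp only [Pi.add_apply, Pi.smul_apply, smul_eq_mul, sum_add_distrib, ← mul_sum, hs₁, hs₂]
    ring
  · have := hz₁ p i; have := hz₂ p i
    simp only [Pi.add_apply, Pi.smul_apply, smul_eq_mul]
    constructor <;> nlinarith

theorem mem_hypersimplexUnionLift {c : τ → ℕ} {v : ι → ℝ} (hv : ∀ i, v i = 0 ∨ v i = 1)
    {p : τ} (hp : ∑ i, v i = c p) : v ∈ hypersimplexUnionLift c := by
  classical
  have hv01 : ∀ i, 0 ≤ v i ∧ v i ≤ 1 := fun i => by rcases hv i with h | h <;> simp [h]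
  refine ⟨Pi.single p 1, Pi.single p v, by simp, fun p' => ?_,
    fun i => by simp [← Finset.sum_apply], fun p' => ?_, fun p' i => ?_⟩
  all_goals rcases eq_or_ne p' p with rfl | hp'
  all_goals simp [*]

theorem hypersimplexUnionLift_subset_convexHull (c : τ → ℕ) :
    hypersimplexUnionLift c ⊆
      convexHull ℝ {v : ι → ℝ | (∀ i, v i = 0 ∨ v i = 1) ∧ ∃ p, ∑ i, v i = c p} := by
  classical
  rintro x ⟨w, z, hw, hw01, hx, hs, hz⟩
  set V := {v : ι → ℝ | (∀ i, v i = 0 ∨ v i = 1) ∧ ∃ p, ∑ i, v i = c p}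
  have hmem : ∀ p, w p ≠ 0 → (w p)⁻¹ • z p ∈ convexHull ℝ V := by
    intro p hp
    have hV : {v : ι → ℝ | (∀ i, v i = 0 ∨ v i = 1) ∧ ∑ i, v i = c p} ⊆ V :=
      fun v hv => ⟨hv.1, p, hv.2⟩
    exact convexHull_mono hV <| hypersimplex_subset_convexHull (c p) <|
      inv_smul_mem_hypersimplex ((hw01 p).1.lt_of_ne' hp) (hz p) (hs p)
  have hz0 : ∀ p, z p ≠ 0 → w p ≠ 0 := fun p hzp hwp =>
    hzp <| funext fun i => le_antisymm (hwp ▸ (hz p i).2 :) (hz p i).1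
  have hx' : x = ∑ p ∈ univ.filter (w · ≠ 0), w p • (w p)⁻¹ • z p := by
    calc x = ∑ p, z p := funext fun i => by simp [Finset.sum_apply, hx]
      _ = ∑ p ∈ univ.filter (w · ≠ 0), z p := (sum_filter_of_ne fun p _ => hz0 p).symm
      _ = _ := sum_congr rfl fun p hp => (smul_inv_smul₀ (mem_filter.1 hp).2 _).symm
  rw [hx']
  exact (convex_convexHull ℝ V).sum_mem (fun p _ => (hw01 p).1)
    (by rw [sum_filter_ne_zero, hw]) fun p hp => hmem p (mem_filter.1 hp).2

theorem convexHull_eq_hypersimplexUnionLift (c : τ → ℕ) :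
    convexHull ℝ {v : ι → ℝ | (∀ i, v i = 0 ∨ v i = 1) ∧ ∃ p, ∑ i, v i = c p} =
      hypersimplexUnionLift c := by
  refine (convexHull_min ?_ (convex_hypersimplexUnionLift c)).antisymm
    (hypersimplexUnionLift_subset_convexHull c)
  rintro v ⟨hv, p, hp⟩
  exact mem_hypersimplexUnionLift hv hp

end Lift

theorem odd_div_two_pow_iff (s q : ℕ) :
    Odd (s / 2 ^ q) ↔ ∃ t r, r < 2 ^ q ∧ s = 2 ^ q * (2 * t + 1) + r := by
  constructor
  · rintro ⟨t, ht⟩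
    exact ⟨t, s % 2 ^ q, Nat.mod_lt _ (by positivity), by rw [← ht, Nat.div_add_mod]⟩
  · rintro ⟨t, r, hr, rfl⟩
    rw [Nat.mul_add_div (by positivity), Nat.div_eq_of_lt hr, add_zero]
    exact odd_two_mul_add_one t

theorem truncParityPolytope_eq_convexHull (n q : ℕ) :
    truncParityPolytope n q = convexHull ℝ {v : Fin n → ℝ | (∀ i, v i = 0 ∨ v i = 1) ∧
      ∃ p : Fin (n / 2 ^ (q + 1) + 1) × Fin (2 ^ q),
        ∑ i, v i = ((2 ^ q * (2 * (p.1 : ℕ) + 1) + (p.2 : ℕ) : ℕ) : ℝ)} := by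
  refine congrArg (convexHull ℝ) (Set.ext fun v => and_congr_right fun hv => ?_)
  constructor
  · rintro ⟨s, hs, hodd⟩
    obtain ⟨t, r, hr, rfl⟩ := (odd_div_two_pow_iff s q).1 hodd
    have hsn : ∑ i, v i ≤ n := by
      calc ∑ i, v i ≤ ∑ _i : Fin n, (1 : ℝ) :=
            sum_le_sum fun i _ => by rcases hv i with h | h <;> simp [h]
        _ = n := by simp
    have ht : t ≤ n / 2 ^ (q + 1) := by
      rw [Nat.le_div_iff_mul_le (by positivity), pow_succ]
      have : 2 ^ q * (2 * t + 1) + r ≤ n := by exact_mod_cast hs ▸ hsn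
      nlinarith
    exact ⟨(⟨t, Nat.lt_succ_of_le ht⟩, ⟨r, hr⟩), hs⟩
  · rintro ⟨p, hp⟩
    exact ⟨_, hp, (odd_div_two_pow_iff _ q).2 ⟨p.1, p.2, p.2.isLt, rfl⟩⟩

theorem statement5_general (n q : ℕ) (x : Fin n → ℝ) :
    x ∈ truncParityPolytope n q ↔
      ∃ (w : Fin (n / 2 ^ (q + 1) + 1) × Fin (2 ^ q) → ℝ)
        (z : Fin (n / 2 ^ (q + 1) + 1) × Fin (2 ^ q) → Fin n → ℝ),
        (∑ p, w p = 1) ∧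
        (∀ p, 0 ≤ w p ∧ w p ≤ 1) ∧
        (∀ i, ∑ p, z p i = x i) ∧
        (∀ p, ∑ i, z p i = ((2 ^ q * (2 * (p.1 : ℕ) + 1) + (p.2 : ℕ) : ℕ) : ℝ) * w p) ∧
        (∀ p i, 0 ≤ z p i ∧ z p i ≤ w p) := by
  rw [truncParityPolytope_eq_convexHull]
  exact Set.ext_iff.1 (convexHull_eq_hypersimplexUnionLift _) x

/-- the lift of the truncated parity polytope.  With
`T = {0,…,⌊n/2^{q+1}⌋} × {0,…,2^q-1}`, a vector `x ∈ ℝ^n` lies in `PP(n,q)` iff there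
are reals `(w_{t,r})` and `(z_{t,r,i})` with `Σ w_{t,r} = 1`, `0 ≤ w_{t,r} ≤ 1`,
`Σ_{(t,r)} z_{t,r,i} = x_i`, `Σ_i z_{t,r,i} = (2^q(2t+1)+r) w_{t,r}` and
`0 ≤ z_{t,r,i} ≤ w_{t,r}`. -/
theorem statement5 (n q : ℕ) (hn : 1 ≤ n) (hq : q ≤ Nat.size n - 1) (x : Fin n → ℝ) :
    x ∈ truncParityPolytope n q ↔
      ∃ (w : Fin (n / 2 ^ (q + 1) + 1) × Fin (2 ^ q) → ℝ)
        (z : Fin (n / 2 ^ (q + 1) + 1) × Fin (2 ^ q) → Fin n → ℝ),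
        (∑ p, w p = 1) ∧
        (∀ p, 0 ≤ w p ∧ w p ≤ 1) ∧
        (∀ i, ∑ p, z p i = x i) ∧
        (∀ p, ∑ i, z p i = ((2 ^ q * (2 * (p.1 : ℕ) + 1) + (p.2 : ℕ) : ℕ) : ℝ) * w p) ∧
        (∀ p i, 0 ≤ z p i ∧ z p i ≤ w p) :=
  statement5_general n q x
end

section
/- Let G be a group acting on a finite set U, let W and V be finite sets, and let P ⊆ ℝ^U × ℝ^W be a G-symmetric polyhedron defined by a family of |V| linear inequality constraints. If P recognizes a set A ⊆ {0,1}^U, then there exist a finite set W' with |W'| ≤ |W| and a rigid G-symmetric polyhedron Q ⊆ ℝ^U × ℝ^{W'}, definable by at most |V| linear inequality constraints, that recognizes A. -/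
/-- The action of a pair `(π, σ)` on a point of `ℝ^U × ℝ^W`. -/
def pairAct {G U W : Type} [Group G] [MulAction G U]
    (π : G) (σ : Equiv.Perm W) (p : (U → ℝ) × (W → ℝ)) : (U → ℝ) × (W → ℝ) :=
  (fun u => p.1 (π⁻¹ • u), fun w => p.2 (σ⁻¹ w))

/-- `P ⊆ ℝ^U × ℝ^W` is `G`-symmetric: every `π ∈ G` extends to some `σ ∈ Sym_W`
with `(π,σ) · P = P`. -/
def GSymmetric (G : Type) {U W : Type} [Group G] [MulAction G U]
    (P : Set ((U → ℝ) × (W → ℝ))) : Prop :=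
  ∀ π : G, ∃ σ : Equiv.Perm W, pairAct π σ '' P = P

/-- `P ⊆ ℝ^U × ℝ^W` is rigid `G`-symmetric: for every `π ∈ G` there is a unique
`σ ∈ Sym_W` with `(π,σ) · P = P`. -/
def RigidGSymmetric (G : Type) {U W : Type} [Group G] [MulAction G U]
    (P : Set ((U → ℝ) × (W → ℝ))) : Prop :=
  ∀ π : G, ∃! σ : Equiv.Perm W, pairAct π σ '' P = P

/-- `P` recognizes `A ⊆ {0,1}^U`: every `a ∈ A` is the projection to `ℝ^U` of a point
of `P`, and no point of `{0,1}^U \ A` is such a projection. -/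
def Recognizes {U W : Type} (P : Set ((U → ℝ) × (W → ℝ))) (A : Set (U → ℝ)) : Prop :=
  (∀ a ∈ A, ∃ y, (a, y) ∈ P) ∧
  (∀ x : U → ℝ, (∀ u, x u = 0 ∨ x u = 1) → x ∉ A → ∀ y, (x, y) ∉ P)

/-- The polyhedron in `ℝ^U × ℝ^W` determined by coefficient vectors `a v` and offsets
`b v`, for `v` in a finite index set `V`. -/
def polyhedronOf {U W V : Type} [Fintype U] [Fintype W]
    (a : V → (U → ℝ) × (W → ℝ)) (b : V → ℝ) : Set ((U → ℝ) × (W → ℝ)) :=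
  {p | ∀ v : V, (∑ u, (a v).1 u * p.1 u) + (∑ w, (a v).2 w * p.2 w) ≤ b v}

/-!
The pairs `(π, σ)` with `(π, σ) · P = P` form the stabilizer of `P` under an action of
`G × Sym_W`, and `P` is rigid exactly when the subgroup `S` of those `σ` that pair with `π = 1` is
trivial. Otherwise replace `W` by the set of `S`-orbits, summing the coefficients of each orbit.
Points of the new polyhedron are the `S`-invariant points of `P`; since `P` is convex, averaging
over `S` makes any point invariant, so the new polyhedron still recognizes `A`. Because `S` is
normalized by every `σ` pairing with some `π`, the new polyhedron is still `G`-symmetric, with the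
same constraints and strictly fewer auxiliary coordinates; now induct on `|W|`.
-/

open Pointwise MulAction

@[reducible] def pairAction {G U W : Type} [Group G] [MulAction G U] :
    MulAction (G × Equiv.Perm W) ((U → ℝ) × (W → ℝ)) where
  smul g p := pairAct g.1 g.2 p
  one_smul p := by
    change pairAct 1 1 p = p
    ext <;> simp [pairAct]
  mul_smul g h p := by
    change pairAct (g.1 * h.1) (g.2 * h.2) p = pairAct g.1 g.2 (pairAct h.1 h.2 p)
    ext <;> simp [pairAct, mul_smul]

attribute [local instance] pairAction

lemma convex_polyhedronOf {U W V : Type} [Fintype U] [Fintype W]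
    (a : V → (U → ℝ) × (W → ℝ)) (b : V → ℝ) : Convex ℝ (polyhedronOf a b) := by
  rw [polyhedronOf, Set.ofPred_forall]
  refine convex_iInter fun v => convex_halfSpace_le ⟨fun p q => ?_, fun c p => ?_⟩ (b v)
  · simp only [Prod.fst_add, Prod.snd_add, Pi.add_apply, mul_add, Finset.sum_add_distrib]
    ring
  · simp only [Prod.smul_fst, Prod.smul_snd, Pi.smul_apply, smul_eq_mul, mul_add,
      Finset.mul_sum, mul_left_comm c]

section PermStabilizer

variable {G U W : Type} [Group G] [MulAction G U]

lemma pairAction_smul_def (g : G × Equiv.Perm W) (p : (U → ℝ) × (W → ℝ)) :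
    g • p = (fun u => p.1 (g.1⁻¹ • u), fun w => p.2 (g.2⁻¹ w)) :=
  rfl

lemma pairAct_image_eq_iff {π : G} {σ : Equiv.Perm W} {P : Set ((U → ℝ) × (W → ℝ))} :
    pairAct π σ '' P = P ↔ (π, σ) ∈ stabilizer (G × Equiv.Perm W) P :=
  Iff.rfl

def permStabilizer (G : Type) [Group G] [MulAction G U] (P : Set ((U → ℝ) × (W → ℝ))) :
    Subgroup (Equiv.Perm W) :=
  (stabilizer (G × Equiv.Perm W) P).comap (MonoidHom.inr G (Equiv.Perm W))

variable {P : Set ((U → ℝ) × (W → ℝ))}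

lemma mem_permStabilizer {τ : Equiv.Perm W} :
    τ ∈ permStabilizer G P ↔ ((1 : G), τ) ∈ stabilizer (G × Equiv.Perm W) P :=
  Iff.rfl

lemma mem_of_mem_permStabilizer {τ : Equiv.Perm W} (hτ : τ ∈ permStabilizer G P)
    {p : (U → ℝ) × (W → ℝ)} (hp : p ∈ P) : (p.1, p.2 ∘ τ) ∈ P := by
  have := (mem_stabilizer_set.1 (inv_mem (mem_permStabilizer.1 hτ)) p).2 hp
  simp only [pairAction_smul_def, Prod.fst_inv, Prod.snd_inv, inv_inv, one_smul] at this
  exact this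

lemma rigidGSymmetric_of_permStabilizer_eq_bot (hsym : GSymmetric G P)
    (hbot : permStabilizer G P = ⊥) : RigidGSymmetric G P := by
  intro π
  obtain ⟨σ, hσ⟩ := hsym π
  refine ⟨σ, hσ, fun σ' hσ' => ?_⟩
  have hquot : ((1 : G), σ⁻¹ * σ') = (π, σ)⁻¹ * (π, σ') := by simp
  have : σ⁻¹ * σ' ∈ permStabilizer G P := by
    rw [mem_permStabilizer, hquot]
    exact mul_mem (inv_mem (pairAct_image_eq_iff.1 hσ)) (pairAct_image_eq_iff.1 hσ')
  rw [hbot, Subgroup.mem_bot, inv_mul_eq_one] at this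
  exact this.symm

lemma mem_normalizer_permStabilizer {π : G} {σ : Equiv.Perm W}
    (h : (π, σ) ∈ stabilizer (G × Equiv.Perm W) P) :
    σ ∈ Subgroup.normalizer (permStabilizer G P : Set (Equiv.Perm W)) := by
  refine Subgroup.mem_normalizer_iff.2 fun τ => ?_
  have hconj : ((1 : G), σ * τ * σ⁻¹) = (π, σ) * (1, τ) * (π, σ)⁻¹ := by simp
  rw [mem_permStabilizer, mem_permStabilizer, hconj,
    Subgroup.mul_mem_cancel_right _ (inv_mem h), Subgroup.mul_mem_cancel_left _ h]

end PermStabilizer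

section OrbitQuotient

open Classical

variable {U W : Type} (S : Subgroup (Equiv.Perm W))

def liftPoint (p : (U → ℝ) × (orbitRel.Quotient S W → ℝ)) : (U → ℝ) × (W → ℝ) :=
  (p.1, fun w => p.2 (Quotient.mk _ w))

lemma orbitRel_iff_orbitRel_apply {σ : Equiv.Perm W}
    (hσ : σ ∈ Subgroup.normalizer (S : Set (Equiv.Perm W))) (w₁ w₂ : W) :
    orbitRel S W w₁ w₂ ↔ orbitRel S W (σ w₁) (σ w₂) := by
  simp only [orbitRel_apply, mem_orbit_iff, Subtype.exists]
  constructor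
  · rintro ⟨τ, hτ, rfl⟩
    exact ⟨σ * τ * σ⁻¹, (Subgroup.mem_set_normalizer_iff.1 hσ τ).1 hτ, by simp⟩
  · rintro ⟨τ, hτ, h⟩
    refine ⟨σ⁻¹ * τ * σ, (Subgroup.mem_set_normalizer_iff''.1 hσ τ).1 hτ, σ.injective ?_⟩
    simpa using h

def quotientPerm {σ : Equiv.Perm W} (hσ : σ ∈ Subgroup.normalizer (S : Set (Equiv.Perm W))) :
    Equiv.Perm (orbitRel.Quotient S W) :=
  Quotient.congr σ (orbitRel_iff_orbitRel_apply S hσ)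

lemma liftPoint_smul {G : Type} [Group G] [MulAction G U] (π : G) {σ : Equiv.Perm W}
    (hσ : σ ∈ Subgroup.normalizer (S : Set (Equiv.Perm W)))
    (p : (U → ℝ) × (orbitRel.Quotient S W → ℝ)) :
    liftPoint S ((π, quotientPerm S hσ) • p) = (π, σ) • liftPoint S p := by
  refine Prod.ext rfl (funext fun w => congrArg p.2 ?_)
  exact (Equiv.symm_apply_eq _).2 (by simp [quotientPerm])

variable [Fintype W]

lemma card_orbitRel_quotient_lt (hS : S ≠ ⊥) :
    Fintype.card (orbitRel.Quotient S W) < Fintype.card W := by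
  obtain ⟨⟨τ, hτS⟩, hτ⟩ := Subgroup.ne_bot_iff_exists_ne_one.1 hS
  obtain ⟨w, hw⟩ : ∃ w, τ w ≠ w := by
    by_contra! h
    exact hτ (Subtype.ext (Equiv.ext h))
  exact Fintype.card_lt_of_surjective_not_injective _ Quotient.mk_surjective fun hinj =>
    hw (hinj (Quotient.sound ⟨⟨τ, hτS⟩, rfl⟩))

/-- Averaging over `S` turns a point of `P` into an `S`-invariant one. -/
lemma exists_liftPoint_mem {P : Set ((U → ℝ) × (W → ℝ))} (hP : Convex ℝ P)
    (hS : ∀ τ ∈ S, ∀ p ∈ P, (p.1, p.2 ∘ τ) ∈ P) {x : U → ℝ} {y : W → ℝ} (hxy : (x, y) ∈ P) :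
    ∃ y' : orbitRel.Quotient S W → ℝ, liftPoint S (x, y') ∈ P := by
  set c : ℝ := (Fintype.card S : ℝ)⁻¹
  let yAvg : W → ℝ := fun w => c * ∑ τ : S, y ((τ : Equiv.Perm W) w)
  have hconst : ∀ w₁ w₂, orbitRel S W w₁ w₂ → yAvg w₁ = yAvg w₂ := by
    rintro w₁ w₂ ⟨ρ, rfl⟩
    exact congrArg (c * ·) (Fintype.sum_equiv (Equiv.mulRight ρ) _ _ fun τ => rfl)
  refine ⟨Quotient.lift yAvg hconst, ?_⟩
  have hsum : liftPoint S (x, Quotient.lift yAvg hconst) =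
      ∑ τ : S, c • (x, y ∘ (τ : Equiv.Perm W)) := by
    refine Prod.ext ?_ (funext fun w => ?_)
    · simp [liftPoint, Prod.fst_sum, c, ← Nat.cast_smul_eq_nsmul ℝ, smul_smul]
    · simp [liftPoint, yAvg, Prod.snd_sum, Finset.sum_apply, Finset.mul_sum]
  rw [hsum]
  exact hP.sum_mem (fun _ _ => by positivity) (by simp [c]) fun τ _ => hS τ τ.2 _ hxy

/-- The coefficient of an orbit is the sum of the coefficients over it, so that `liftPoint`
identifies the polyhedron `polyhedronOf (quotientCoeff S a) b` with the `S`-invariant part of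
`polyhedronOf a b`. -/
noncomputable def quotientCoeff {V : Type} (a : V → (U → ℝ) × (W → ℝ)) :
    V → (U → ℝ) × (orbitRel.Quotient S W → ℝ) :=
  fun v => ((a v).1, fun o => ∑ w with Quotient.mk _ w = o, (a v).2 w)

variable {V : Type} {a : V → (U → ℝ) × (W → ℝ)}

lemma sum_quotientCoeff_mul (v : V) (y : orbitRel.Quotient S W → ℝ) :
    ∑ o, (quotientCoeff S a v).2 o * y o = ∑ w, (a v).2 w * y (Quotient.mk _ w) := by
  rw [← Finset.sum_fiberwise Finset.univ (Quotient.mk (orbitRel S W))]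
  refine Finset.sum_congr rfl fun o _ => ?_
  rw [quotientCoeff, Finset.sum_mul]
  refine Finset.sum_congr rfl fun w hw => ?_
  rw [(Finset.mem_filter.1 hw).2]

variable [Fintype U] {b : V → ℝ}

lemma mem_polyhedronOf_quotientCoeff_iff (p : (U → ℝ) × (orbitRel.Quotient S W → ℝ)) :
    p ∈ polyhedronOf (quotientCoeff S a) b ↔ liftPoint S p ∈ polyhedronOf a b := by
  simp only [polyhedronOf, Set.mem_ofPred_eq, sum_quotientCoeff_mul]
  rfl

lemma mem_stabilizer_polyhedronOf_quotientCoeff {G : Type} [Group G] [MulAction G U] {π : G}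
    {σ : Equiv.Perm W} (h : (π, σ) ∈ stabilizer (G × Equiv.Perm W) (polyhedronOf a b))
    (hσ : σ ∈ Subgroup.normalizer (S : Set (Equiv.Perm W))) :
    (π, quotientPerm S hσ) ∈ stabilizer (G × Equiv.Perm (orbitRel.Quotient S W))
      (polyhedronOf (quotientCoeff S a) b) := by
  refine mem_stabilizer_set.2 fun p => ?_
  rw [mem_polyhedronOf_quotientCoeff_iff, mem_polyhedronOf_quotientCoeff_iff, liftPoint_smul]
  exact mem_stabilizer_set.1 h _

end OrbitQuotient

section Reduction

open Classical

variable {G U W V : Type} [Group G] [MulAction G U] [Fintype U] [Fintype W]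
  {a : V → (U → ℝ) × (W → ℝ)} {b : V → ℝ} {A : Set (U → ℝ)}

lemma gSymmetric_polyhedronOf_quotientCoeff (hsym : GSymmetric G (polyhedronOf a b)) :
    GSymmetric G (polyhedronOf (quotientCoeff (permStabilizer G (polyhedronOf a b)) a) b) := by
  intro π
  obtain ⟨σ, hσ⟩ := hsym π
  exact ⟨_, mem_stabilizer_polyhedronOf_quotientCoeff _ hσ (mem_normalizer_permStabilizer hσ)⟩

lemma recognizes_polyhedronOf_quotientCoeff {S : Subgroup (Equiv.Perm W)}
    (hS : S ≤ permStabilizer G (polyhedronOf a b)) (hrec : Recognizes (polyhedronOf a b) A) :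
    Recognizes (polyhedronOf (quotientCoeff S a) b) A := by
  refine ⟨fun x hx => ?_, fun x hx hxA y hxy => ?_⟩
  · obtain ⟨y, hy⟩ := hrec.1 x hx
    obtain ⟨y', hy'⟩ := exists_liftPoint_mem S (convex_polyhedronOf a b)
      (fun τ hτ p hp => mem_of_mem_permStabilizer (hS hτ) hp) hy
    exact ⟨y', (mem_polyhedronOf_quotientCoeff_iff S _).2 hy'⟩
  · exact hrec.2 x hx hxA _ ((mem_polyhedronOf_quotientCoeff_iff S (x, y)).1 hxy)

theorem exists_rigidGSymmetric_polyhedronOf (hsym : GSymmetric G (polyhedronOf a b))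
    (hrec : Recognizes (polyhedronOf a b) A) :
    ∃ (W' : Type) (_ : Fintype W') (a' : V → (U → ℝ) × (W' → ℝ)),
      Fintype.card W' ≤ Fintype.card W ∧
        RigidGSymmetric G (polyhedronOf a' b) ∧ Recognizes (polyhedronOf a' b) A := by
  induction h : Fintype.card W using Nat.strong_induction_on generalizing W with
  | _ n ih =>
    by_cases hbot : permStabilizer G (polyhedronOf a b) = ⊥
    · exact ⟨W, _, a, h.le, rigidGSymmetric_of_permStabilizer_eq_bot hsym hbot, hrec⟩
    · have hlt := h ▸ card_orbitRel_quotient_lt _ hbot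
      obtain ⟨W', _, a', hcard, hrig, hrec'⟩ := ih _ hlt
        (gSymmetric_polyhedronOf_quotientCoeff hsym)
        (recognizes_polyhedronOf_quotientCoeff le_rfl hrec) rfl
      exact ⟨W', _, a', hcard.trans hlt.le, hrig, hrec'⟩

end Reduction

theorem statement10_general (G U W V : Type) [Group G] [Fintype U] [MulAction G U]
    [Fintype W] [Fintype V]
    (a : V → (U → ℝ) × (W → ℝ)) (b : V → ℝ)
    (P : Set ((U → ℝ) × (W → ℝ))) (hP : P = polyhedronOf a b)
    (hsym : GSymmetric G P)
    (A : Set (U → ℝ))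
    (hrec : Recognizes P A) :
    ∃ (W' : Type) (_ : Fintype W'), Fintype.card W' ≤ Fintype.card W ∧
      ∃ (V' : Type) (_ : Fintype V'), Fintype.card V' ≤ Fintype.card V ∧
        ∃ (a' : V' → (U → ℝ) × (W' → ℝ)) (b' : V' → ℝ),
          RigidGSymmetric G (polyhedronOf a' b') ∧
          Recognizes (polyhedronOf a' b') A := by
  subst hP
  obtain ⟨W', _, a', hcard, hrig, hrec'⟩ := exists_rigidGSymmetric_polyhedronOf hsym hrec
  exact ⟨W', _, hcard, V, _, le_rfl, a', b, hrig, hrec'⟩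

/-- if a `G`-symmetric polyhedron `P ⊆ ℝ^U × ℝ^W` defined by `|V|` linear
inequality constraints recognizes `A ⊆ {0,1}^U`, then there are a finite set `W'` with
`|W'| ≤ |W|` and a rigid `G`-symmetric polyhedron `Q ⊆ ℝ^U × ℝ^{W'}`, definable by at
most `|V|` linear inequality constraints, recognizing `A`. -/
theorem statement10 (G U W V : Type) [Group G] [Fintype U] [MulAction G U]
    [Fintype W] [Fintype V]
    (a : V → (U → ℝ) × (W → ℝ)) (b : V → ℝ)
    (P : Set ((U → ℝ) × (W → ℝ))) (hP : P = polyhedronOf a b)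
    (hsym : GSymmetric G P)
    (A : Set (U → ℝ)) (hA : ∀ x ∈ A, ∀ u, x u = 0 ∨ x u = 1)
    (hrec : Recognizes P A) :
    ∃ (W' : Type) (_ : Fintype W'), Fintype.card W' ≤ Fintype.card W ∧
      ∃ (V' : Type) (_ : Fintype V'), Fintype.card V' ≤ Fintype.card V ∧
        ∃ (a' : V' → (U → ℝ) × (W' → ℝ)) (b' : V' → ℝ),
          RigidGSymmetric G (polyhedronOf a' b') ∧
          Recognizes (polyhedronOf a' b') A :=
  statement10_general G U W V a b P hP hsym A hrec
end

section
/- Let n ≥ 1 and let k be an integer with 0 ≤ k ≤ n. Let Y be a set with a transitive (single-orbit) action of Sym_n such that some element of Y has a support of size at most k. Then there exists a surjective Sym_n-equivariant map f : [n]^{(k)} → Y. -/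
/-- Any two embeddings `Fin k ↪ Fin n` differ by a permutation. -/
lemma exists_perm_comp {n k : ℕ} (u v : Fin k ↪ Fin n) :
    ∃ π : Equiv.Perm (Fin n), ∀ i, π (u i) = v i := by
  classical
  let e : { x // x ∈ Set.range u } ≃ { x // x ∈ Set.range v } :=
    (Equiv.ofInjective u u.injective).symm.trans (Equiv.ofInjective v v.injective)
  refine ⟨e.extendSubtype, fun i => ?_⟩
  rw [e.extendSubtype_apply_of_mem _ ⟨i, rfl⟩]
  show ((Equiv.ofInjective v v.injective) ((Equiv.ofInjective u u.injective).symm ⟨u i, i, rfl⟩) : Fin n) = v i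
  rw [show ((⟨u i, i, rfl⟩ : { x // x ∈ Set.range u })) = (Equiv.ofInjective u u.injective) i from rfl,
    Equiv.symm_apply_apply]
  rfl

/-- Let `0 ≤ k ≤ n` and let `Y` be a transitive (single-orbit)
`Sym_n`-set some element of which has a support of size at most `k`.  Then there is a
surjective `Sym_n`-equivariant map from `[n]^{(k)}` (the set of `k`-tuples of distinct
elements of `[n]`, i.e. embeddings `Fin k ↪ Fin n`, with the componentwise action) to
`Y`. -/
theorem statement13 (n k : ℕ) (hn : 1 ≤ n) (hk : k ≤ n)
    (Y : Type) [MulAction (Equiv.Perm (Fin n)) Y]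
    (htrans : MulAction.IsPretransitive (Equiv.Perm (Fin n)) Y)
    (hsupp : ∃ (y : Y) (S : Finset (Fin n)), S.card ≤ k ∧
      ∀ π : Equiv.Perm (Fin n), (∀ i ∈ S, π i = i) → π • y = y) :
    ∃ f : (Fin k ↪ Fin n) → Y, Function.Surjective f ∧
      ∀ (π : Equiv.Perm (Fin n)) (v : Fin k ↪ Fin n),
        f (v.trans π.toEmbedding) = π • f v := by
  classical
  obtain ⟨y, S, hScard, hSsupp⟩ := hsupp
  -- enlarge S to a set T of size exactly k
  obtain ⟨T, hST, hTcard⟩ := Finset.exists_superset_card_eq hScard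
    (by simpa using hk)
  -- base embedding with range T
  let e₀ : Fin k ↪ Fin n := (T.orderEmbOfFin hTcard).toEmbedding
  have he₀ : ∀ x ∈ S, ∃ i, e₀ i = x := by
    intro x hx
    have h1 : x ∈ Set.range ⇑(T.orderEmbOfFin hTcard) := by
      rw [T.range_orderEmbOfFin hTcard]; exact hST hx
    exact h1
  -- well-definedness: two perms agreeing on range of e₀ act the same on y
  have key : ∀ π π' : Equiv.Perm (Fin n), (∀ i, π (e₀ i) = π' (e₀ i)) →
      π • y = π' • y := by
    intro π π' h
    have hfix : (π'⁻¹ * π) • y = y := by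
      apply hSsupp
      intro x hx
      obtain ⟨i, rfl⟩ := he₀ x hx
      simp [Equiv.Perm.mul_apply, h i]
    calc π • y = (π' * (π'⁻¹ * π)) • y := by group
      _ = π' • ((π'⁻¹ * π) • y) := mul_smul _ _ _
      _ = π' • y := by rw [hfix]
  choose σ hσ using fun v : Fin k ↪ Fin n => exists_perm_comp e₀ v
  refine ⟨fun v => σ v • y, ?_, ?_⟩
  · intro y'
    obtain ⟨π, hπ⟩ := htrans.exists_smul_eq y y'
    refine ⟨e₀.trans π.toEmbedding, ?_⟩
    show σ (e₀.trans π.toEmbedding) • y = y'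
    rw [key _ π (fun i => by rw [hσ]; rfl)]
    exact hπ
  · intro π v
    show σ (v.trans π.toEmbedding) • y = π • (σ v • y)
    rw [key (σ (v.trans π.toEmbedding)) (π * σ v) (fun i => by
      simp [hσ, Equiv.Perm.mul_apply])]
    exact mul_smul π (σ v) y
end

section
/- Let n ≥ 1 and let k be an integer with 0 ≤ k ≤ n. Let Y be a finite set with an action of Sym_n such that every element of Y has a support of size at most k. Then there exist a finite set Q, on which Sym_n acts trivially and whose cardinality equals the number of orbits of Y, and a surjective Sym_n-equivariant map from Q × [n]^{(k)} to Y (where Sym_n acts on Q × [n]^{(k)} by acting componentwise on the second factor). -/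
open MulAction

namespace Equiv.Perm

variable {α Y : Type*} [MulAction (Perm α) Y]

theorem smul_eq_smul_of_supports {s : Set α} {y : Y} (hy : Supports (Perm α) s y)
    {σ τ : Perm α} (h : ∀ a ∈ s, σ a = τ a) : σ • y = τ • y := by
  have hfix : (τ⁻¹ * σ) • y = y := hy _ fun a ha => by simp [Perm.smul_def, h a ha]
  calc σ • y = τ • (τ⁻¹ * σ) • y := by rw [smul_smul, mul_inv_cancel_left]
    _ = τ • y := by rw [hfix]

theorem smul_eq_smul_of_smul_embedding_eq {ι : Type*} {v : ι ↪ α} {y : Y}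
    (hy : Supports (Perm α) (Set.range v) y) {σ τ : Perm α} (h : σ • v = τ • v) :
    σ • y = τ • y :=
  smul_eq_smul_of_supports hy <| by
    rintro _ ⟨i, rfl⟩
    simpa using congr($h i)

theorem exists_embedding_supports [Fintype α] {k : ℕ} (hk : k ≤ Fintype.card α) {s : Finset α}
    (hs : s.card ≤ k) {y : Y} (hy : Supports (Perm α) (s : Set α) y) :
    ∃ v : Fin k ↪ α, Supports (Perm α) (Set.range v) y := by
  obtain ⟨t, hst, rfl⟩ := Finset.exists_superset_card_eq hs (by simpa using hk)
  refine ⟨t.equivFin.symm.toEmbedding.trans (Function.Embedding.subtype _), hy.mono ?_⟩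
  intro a ha
  exact ⟨t.equivFin ⟨a, hst ha⟩, by simp⟩

/-- The orbit map `g • v ↦ g • y` is well defined since `y` is supported on the range of `v`. -/
theorem exists_equivariant_of_supports {ι : Type*} [Finite ι] {v : ι ↪ α} {y : Y}
    (hy : Supports (Perm α) (Set.range v) y) :
    ∃ F : (ι ↪ α) → Y, F v = y ∧ ∀ (π : Perm α) (w : ι ↪ α), F (π • w) = π • F w := by
  choose σ hσ using fun w : ι ↪ α => exists_smul_eq_embedding v w
  refine ⟨fun w => σ w • y, ?_, fun π w => ?_⟩
  · simpa using smul_eq_smul_of_smul_embedding_eq hy (σ := σ v) (τ := 1) (by simpa using hσ v)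
  · rw [smul_smul]
    exact smul_eq_smul_of_smul_embedding_eq hy (by rw [hσ, mul_smul, hσ])

end Equiv.Perm

theorem statement14_general (n k : ℕ) (hk : k ≤ n)
    (Y : Type) [Fintype Y] [MulAction (Equiv.Perm (Fin n)) Y]
    (hsupp : ∀ y : Y, ∃ S : Finset (Fin n), S.card ≤ k ∧
      ∀ π : Equiv.Perm (Fin n), (∀ i ∈ S, π i = i) → π • y = y) :
    ∃ (Q : Type) (_ : Fintype Q),
      Fintype.card Q = Nat.card (MulAction.orbitRel.Quotient (Equiv.Perm (Fin n)) Y) ∧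
      ∃ f : Q × (Fin k ↪ Fin n) → Y, Function.Surjective f ∧
        ∀ (π : Equiv.Perm (Fin n)) (q : Q) (v : Fin k ↪ Fin n),
          f (q, v.trans π.toEmbedding) = π • f (q, v) := by
  let Q := orbitRel.Quotient (Equiv.Perm (Fin n)) Y
  have hembed (q : Q) :
      ∃ v : Fin k ↪ Fin n, Supports (Equiv.Perm (Fin n)) (Set.range v) q.out := by
    obtain ⟨S, hS, hSupp⟩ := hsupp q.out
    exact Equiv.Perm.exists_embedding_supports (by simpa using hk) hS hSupp
  choose v₀ hv₀ using hembed
  choose F hFv₀ hF using fun q => Equiv.Perm.exists_equivariant_of_supports (hv₀ q)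
  let _ : Fintype Q := Fintype.ofFinite Q
  refine ⟨Q, inferInstance, Nat.card_eq_fintype_card.symm, fun p => F p.1 p.2, ?_,
    fun π q v => hF q π v⟩
  intro y
  obtain ⟨g, hg⟩ : y ∈ orbit (Equiv.Perm (Fin n)) (⟦y⟧ : Q).out :=
    (orbitRel _ Y).symm (Quotient.mk_out y)
  exact ⟨(⟦y⟧, g • v₀ ⟦y⟧), (hF _ g _).trans (by rw [hFv₀]; exact hg)⟩

/-- Let `0 ≤ k ≤ n` and let `Y` be a finite `Sym_n`-set each of whose
elements has a support of size at most `k`.  Then there are a finite set `Q` (with the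
trivial `Sym_n`-action) whose cardinality is the number of orbits of `Y`, and a
surjective `Sym_n`-equivariant map from `Q × [n]^{(k)}` to `Y`, where `Sym_n` acts
componentwise on the second factor (embeddings `Fin k ↪ Fin n`). -/
theorem statement14 (n k : ℕ) (hn : 1 ≤ n) (hk : k ≤ n)
    (Y : Type) [Fintype Y] [MulAction (Equiv.Perm (Fin n)) Y]
    (hsupp : ∀ y : Y, ∃ S : Finset (Fin n), S.card ≤ k ∧
      ∀ π : Equiv.Perm (Fin n), (∀ i ∈ S, π i = i) → π • y = y) :
    ∃ (Q : Type) (_ : Fintype Q),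
      Fintype.card Q = Nat.card (MulAction.orbitRel.Quotient (Equiv.Perm (Fin n)) Y) ∧
      ∃ f : Q × (Fin k ↪ Fin n) → Y, Function.Surjective f ∧
        ∀ (π : Equiv.Perm (Fin n)) (q : Q) (v : Fin k ↪ Fin n),
          f (q, v.trans π.toEmbedding) = π • f (q, v) :=
  statement14_general n k hk Y hsupp
end

section
/- Let n ≥ 1, m = |n|, and let t be an integer with 0 ≤ t ≤ n. Let K_1 ⊆ [m] be the set of positions k such that the (k−1)-th bit (from least significant) of the binary representation of t is 1, and let K_0 = [m] \ K_1. Then for every x_1,…,x_n ∈ {0,1} there exists a unique y ∈ ℝ for which there exist z_1,…,z_m ∈ ℝ satisfying: for every q = 0,1,…,m−1 the vector (x_1,…,x_n, 1^{(2^q)}, z_1^{(1)}, z_2^{(2)}, …, z_q^{(2^{q−1})}, 1−z_{q+1}) lies in PP(n+2^{q+1}, q); and y ≥ Σ_{k∈K_0} z_k + Σ_{k∈K_1} (1−z_k) − m + 1, y ≤ z_k for every k ∈ K_0, y ≤ 1−z_k for every k ∈ K_1, and 0 ≤ y ≤ 1. Moreover, y = 1 if Σ_{i=1}^n x_i = t,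 and y = 0 otherwise. -/
/-- The vector `(x_1,…,x_n, 1^{(2^q)}, z_1^{(1)}, z_2^{(2)}, …, z_q^{(2^{q-1})},
1 - z_{q+1})` of length `n + 2^{q+1}` (with `z` 0-indexed, so `z_k = z (k-1)`). -/
noncomputable def bitGadget (n q : ℕ) (x : Fin n → ℝ) (z : ℕ → ℝ) :
    Fin (n + 2 ^ (q + 1)) → ℝ := fun j =>
  if h : (j : ℕ) < n then x ⟨j, h⟩
  else if (j : ℕ) < n + 2 ^ q then 1
  else if (j : ℕ) = n + 2 ^ (q + 1) - 1 then 1 - z q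
  else z (Nat.size ((j : ℕ) - (n + 2 ^ q) + 1) - 1)

/-- The constraints of the exact-counting gate `EX_{n,t}(x, y)`: the truncated parity
polytope constraints computing the flipped bits `z_1,…,z_m` (where `m = |n| =
Nat.size n`) of `Σ x_i`, together with the AND-comparator constraints against the bits
of `t`.  Here `K_1 ⊆ [m]` is the set of (1-based) positions `k` such that bit `k-1` of
`t` is `1` (expressed 0-indexed via `Nat.testBit`), and `K_0` its complement. -/
noncomputable def ExGateCond (n t : ℕ) (x : Fin n → ℝ) (y : ℝ)
    (z : Fin (Nat.size n) → ℝ) : Prop :=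
  (∀ q, q < Nat.size n →
      bitGadget n q x (fun i => if h : i < Nat.size n then z ⟨i, h⟩ else 0) ∈
        truncParityPolytope (n + 2 ^ (q + 1)) q) ∧
  ((∑ k : Fin (Nat.size n),
      if t.testBit (k : ℕ) then 1 - z k else z k) - (Nat.size n : ℝ) + 1 ≤ y) ∧
  (∀ k : Fin (Nat.size n), ¬ t.testBit (k : ℕ) → y ≤ z k) ∧
  (∀ k : Fin (Nat.size n), t.testBit (k : ℕ) → y ≤ 1 - z k) ∧
  0 ≤ y ∧ y ≤ 1

open Finset

section ConvexHull

variable {ι : Type*}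

theorem mem_Icc_of_mem_convexHull {V : Set (ι → ℝ)} (hV : ∀ v ∈ V, ∀ j, v j = 0 ∨ v j = 1)
    {p : ι → ℝ} (hp : p ∈ convexHull ℝ V) (j : ι) : p j ∈ Set.Icc 0 1 := by
  have hcube : V ⊆ Set.Icc 0 1 := fun v hv =>
    ⟨fun j => by rcases hV v hv j with h | h <;> simp [h],
      fun j => by rcases hV v hv j with h | h <;> simp [h]⟩
  obtain ⟨h0, h1⟩ := convexHull_min hcube (convex_Icc 0 1) hp
  exact ⟨h0 j, h1 j⟩

theorem one_le_sum_abs_sub_of_mem_convexHull [Fintype ι] {V : Set (ι → ℝ)}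
    (hV : ∀ v ∈ V, ∀ j, v j = 0 ∨ v j = 1) {w : ι → ℝ} (hw : ∀ j, w j = 0 ∨ w j = 1)
    (hwV : w ∉ V) {p : ι → ℝ} (hp : p ∈ convexHull ℝ V) : 1 ≤ ∑ j, |p j - w j| := by
  -- on the unit cube, `|t - w j|` is the affine function `w j + (1 - 2 w j) t`
  have habs : ∀ v : ι → ℝ, (∀ j, v j ∈ Set.Icc 0 1) →
      ∑ j, |v j - w j| = ∑ j, (w j + (1 - 2 * w j) * v j) :=
    fun v hv => sum_congr rfl fun j _ => by
      rcases hw j with h | h <;> rw [h] <;> [rw [abs_of_nonneg]; rw [abs_of_nonpos]] <;>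
        linarith [(hv j).1, (hv j).2]
  have hlin : IsLinearMap ℝ fun v : ι → ℝ => ∑ j, (1 - 2 * w j) * v j :=
    ⟨fun u v => by simp [mul_add, sum_add_distrib],
      fun c v => by simp [mul_sum, mul_left_comm]⟩
  have hconv : Convex ℝ {v : ι → ℝ | 1 ≤ ∑ j, (w j + (1 - 2 * w j) * v j)} := by
    simpa only [sum_add_distrib, ← sub_le_iff_le_add'] using
      convex_halfSpace_ge hlin (1 - ∑ j, w j)
  have hVsub : V ⊆ {v | 1 ≤ ∑ j, (w j + (1 - 2 * w j) * v j)} := by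
    intro v hv
    obtain ⟨k, hk⟩ : ∃ k, v k ≠ w k := by
      by_contra! h
      exact hwV (funext h ▸ hv)
    have hvk : |v k - w k| = 1 := by
      rcases hV v hv k with h | h <;> rcases hw k with h' | h' <;> simp_all
    rw [Set.mem_ofPred_eq, ← habs v (mem_Icc_of_mem_convexHull hV (subset_convexHull ℝ V hv)),
      ← hvk]
    exact single_le_sum (f := fun j => |v j - w j|) (fun j _ => abs_nonneg _) (mem_univ k)
  rw [habs p (mem_Icc_of_mem_convexHull hV hp)]
  exact convexHull_min hVsub hconv hp

theorem apply_eq_of_mem_convexHull [Fintype ι] [DecidableEq ι] {V : Set (ι → ℝ)}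
    (hV : ∀ v ∈ V, ∀ j, v j = 0 ∨ v j = 1) {u : ι → ℝ} (hu : ∀ j, u j = 0 ∨ u j = 1) (L : ι)
    (hVu : ∀ v ∈ V, (∀ j ≠ L, v j = u j) → v L = u L) {p : ι → ℝ}
    (hp : p ∈ convexHull ℝ V) (hpu : ∀ j ≠ L, p j = u j) : p L = u L := by
  set w := Function.update u L (1 - u L)
  have hw : ∀ j, w j = 0 ∨ w j = 1 := fun j => by
    by_cases hj : j = L
    · subst hj; rcases hu j with h | h <;> simp [w, h]
    · simpa [w, hj] using hu j
  have hwV : w ∉ V := fun hwV => by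
    have := hVu w hwV fun j hj => by simp [w, hj]
    rcases hu L with h | h <;> simp [w, h] at this
  have hdist := one_le_sum_abs_sub_of_mem_convexHull hV hw hwV hp
  rw [sum_eq_single L (fun j _ hj => by simp [w, hj, hpu j hj]) (by simp)] at hdist
  obtain ⟨h0, h1⟩ := mem_Icc_of_mem_convexHull hV hp L
  simp only [w, Function.update_self] at hdist
  rcases hu L with h | h <;> rw [h] at hdist ⊢ <;> [rw [abs_of_nonpos (by linarith)] at hdist;
    rw [abs_of_nonneg (by linarith)] at hdist] <;> linarith

end ConvexHull

section BitGadget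

variable {n q : ℕ} {x : Fin n → ℝ} {z z' : ℕ → ℝ}

def gadgetLast (n q : ℕ) : Fin (n + 2 ^ (q + 1)) :=
  ⟨n + 2 ^ (q + 1) - 1, Nat.sub_lt (by positivity) one_pos⟩

theorem bitGadget_gadgetLast : bitGadget n q x z (gadgetLast n q) = 1 - z q := by
  have : 2 ^ (q + 1) = 2 ^ q + 2 ^ q := by ring
  have := Nat.one_le_two_pow (n := q)
  simp only [bitGadget, gadgetLast]
  rw [dif_neg (by omega), if_neg (by omega), if_pos trivial]

theorem size_sub_one_lt {a q : ℕ} (ha : 0 < a) (haq : a < 2 ^ q) : Nat.size a - 1 < q := by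
  have := Nat.size_le.2 haq
  have := Nat.size_pos.2 ha
  omega

theorem bitGadget_congr_of_ne (h : ∀ i < q, z i = z' i) {j : Fin (n + 2 ^ (q + 1))}
    (hj : j ≠ gadgetLast n q) : bitGadget n q x z j = bitGadget n q x z' j := by
  have hjL : (j : ℕ) ≠ n + 2 ^ (q + 1) - 1 := fun h => hj (Fin.ext h)
  have : 2 ^ (q + 1) = 2 ^ q + 2 ^ q := by ring
  have := j.isLt
  simp only [bitGadget, if_neg hjL]
  split_ifs
  · rfl
  · rfl
  · exact h _ (size_sub_one_lt (by omega) (by omega))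

theorem bitGadget_congr (h : ∀ i ≤ q, z i = z' i) : bitGadget n q x z = bitGadget n q x z' := by
  funext j
  by_cases hj : j = gadgetLast n q
  · rw [hj, bitGadget_gadgetLast, bitGadget_gadgetLast, h q le_rfl]
  · exact bitGadget_congr_of_ne (fun i hi => h i hi.le) hj

theorem bitGadget_zero_or_one (hx : ∀ i, x i = 0 ∨ x i = 1) (hz : ∀ i, z i = 0 ∨ z i = 1)
    (j : Fin (n + 2 ^ (q + 1))) : bitGadget n q x z j = 0 ∨ bitGadget n q x z j = 1 := by
  simp only [bitGadget]
  split_ifs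
  · exact hx _
  · exact Or.inr rfl
  · rcases hz q with h | h <;> simp [h]
  · exact hz _

theorem sum_range_two_pow_sub_one_size (z : ℕ → ℝ) (q : ℕ) :
    ∑ k ∈ range (2 ^ q - 1), z (Nat.size (k + 1) - 1) = ∑ i ∈ range q, 2 ^ i * z i := by
  induction q with
  | zero => simp
  | succ q ih =>
    have hpos : 0 < 2 ^ q := by positivity
    have hpow : 2 ^ (q + 1) = 2 ^ q + 2 ^ q := by ring
    have hblock : ∀ k ∈ Ico (2 ^ q - 1) (2 ^ (q + 1) - 1), z (Nat.size (k + 1) - 1) = z q := by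
      intro k hk
      rw [mem_Ico] at hk
      have hle := Nat.size_le.2 (show k + 1 < 2 ^ (q + 1) by omega)
      have hlt := Nat.lt_size.2 (show 2 ^ q ≤ k + 1 by omega)
      rw [show Nat.size (k + 1) - 1 = q by omega]
    rw [← sum_range_add_sum_Ico _ (show 2 ^ q - 1 ≤ 2 ^ (q + 1) - 1 by omega), ih,
      sum_congr rfl hblock, sum_const, Nat.card_Ico, sum_range_succ, nsmul_eq_mul,
      show 2 ^ (q + 1) - 1 - (2 ^ q - 1) = 2 ^ q by omega]
    push_cast
    ring

theorem sum_bitGadget :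
    ∑ j, bitGadget n q x z j = ∑ i, x i + 2 ^ q + ∑ i ∈ range q, 2 ^ i * z i + (1 - z q) := by
  have hpos : 0 < 2 ^ q := by positivity
  have hpow : 2 ^ (q + 1) = 2 ^ q + 2 ^ q := by ring
  have hsplit : ∀ f : ℕ → ℝ, ∑ j ∈ range (n + 2 ^ (q + 1)), f j = ∑ j ∈ range n, f j +
      ∑ j ∈ Ico n (n + 2 ^ q), f j + ∑ j ∈ Ico (n + 2 ^ q) (n + 2 ^ q + (2 ^ q - 1)), f j +
      f (n + 2 ^ (q + 1) - 1) := fun f => by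
    rw [show n + 2 ^ (q + 1) = n + 2 ^ q + (2 ^ q - 1) + 1 by omega, sum_range_succ,
      ← sum_range_add_sum_Ico f (show n ≤ n + 2 ^ q + (2 ^ q - 1) by omega),
      ← sum_Ico_consecutive f (Nat.le_add_right n (2 ^ q)) (Nat.le_add_right _ (2 ^ q - 1)),
      Nat.add_sub_cancel]
    ring
  rw [sum_fin_eq_sum_range, hsplit, sum_fin_eq_sum_range x]
  congr 1
  · congr 1
    · congr 1
      · refine sum_congr rfl fun j hj => ?_
        simp only [mem_range] at hj
        simp [bitGadget, hj, show j < n + 2 ^ (q + 1) by omega]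
      · rw [sum_congr rfl (g := fun _ => (1 : ℝ)) fun j hj => ?_]
        · simp
        · rw [mem_Ico] at hj
          simp [bitGadget, show j < n + 2 ^ (q + 1) by omega, hj.2, show ¬ j < n by omega]
    · rw [sum_Ico_eq_sum_range, Nat.add_sub_cancel_left, ← sum_range_two_pow_sub_one_size]
      refine sum_congr rfl fun k hk => ?_
      rw [mem_range] at hk
      simp [bitGadget, show n + 2 ^ q + k < n + 2 ^ (q + 1) by omega,
        show ¬ n + 2 ^ q + k < n by omega, show n + 2 ^ q + k ≠ n + 2 ^ (q + 1) - 1 by omega]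
  · rw [dif_pos (by omega)]
    exact bitGadget_gadgetLast

end BitGadget

section FlippedBits

def flippedBit (s i : ℕ) : ℝ := 1 - (s.testBit i).toNat

theorem flippedBit_zero_or_one (s i : ℕ) : flippedBit s i = 0 ∨ flippedBit s i = 1 := by
  cases h : s.testBit i <;> simp [flippedBit, h]

theorem sum_pow_mul_flippedBit (s q : ℕ) :
    ∑ i ∈ range q, 2 ^ i * flippedBit s i = 2 ^ q - 1 - (s % 2 ^ q : ℕ) := by
  induction q with
  | zero => simp [Nat.mod_one]
  | succ q ih =>
    rw [sum_range_succ, ih, flippedBit, Nat.toNat_testBit, Nat.pow_succ, Nat.mod_mul]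
    push_cast
    ring

theorem odd_div_two_pow_iff_s18 {q k e : ℕ} (he : e ≤ 1) :
    Odd ((2 ^ q * (k + 2) - 1 + e) / 2 ^ q) ↔ e = k % 2 := by
  have hpos : 0 < 2 ^ q := by positivity
  have hdiv : (2 ^ q * (k + 2) - 1 + e) / 2 ^ q = k + 1 + e := by
    rw [show 2 ^ q * (k + 2) - 1 + e = 2 ^ q * (k + 1 + e) + (2 ^ q - 1 + e - 2 ^ q * e) by
      interval_cases e <;> ring_nf <;> omega]
    rw [Nat.mul_add_div hpos, Nat.div_eq_of_lt (by interval_cases e <;> omega), add_zero]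
  rw [hdiv, Nat.odd_iff]
  omega

variable {n q s : ℕ} {x : Fin n → ℝ} {z : ℕ → ℝ}

theorem sum_bitGadget_of_eq_flippedBit (hs : ∑ i, x i = s)
    (hz : ∀ i < q, z i = flippedBit s i) :
    ∑ j, bitGadget n q x z j = ((2 ^ q * (s / 2 ^ q + 2) - 1 : ℕ) : ℝ) + (1 - z q) := by
  have hdm : (s : ℝ) = 2 ^ q * (s / 2 ^ q : ℕ) + (s % 2 ^ q : ℕ) := by
    exact_mod_cast (Nat.div_add_mod s (2 ^ q)).symm
  rw [sum_bitGadget, hs, sum_congr rfl fun i hi => by rw [hz i (mem_range.1 hi)],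
    sum_pow_mul_flippedBit, Nat.cast_sub (Nat.one_le_iff_ne_zero.2 (by positivity)), hdm]
  push_cast
  ring

end FlippedBits

section TruncParityPolytope

def truncParityVertices (n q : ℕ) : Set (Fin n → ℝ) :=
  {x | (∀ k, x k = 0 ∨ x k = 1) ∧ ∃ s : ℕ, (∑ k, x k) = (s : ℝ) ∧ Odd (s / 2 ^ q)}

theorem truncParityPolytope_eq (n q : ℕ) :
    truncParityPolytope n q = convexHull ℝ (truncParityVertices n q) := rfl

variable {n q s : ℕ} {x : Fin n → ℝ} {z : ℕ → ℝ}

theorem bitGadget_mem_truncParityPolytope (hx : ∀ i, x i = 0 ∨ x i = 1) (hs : ∑ i, x i = s)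
    (hz : ∀ i ≤ q, z i = flippedBit s i) :
    bitGadget n q x z ∈ truncParityPolytope (n + 2 ^ (q + 1)) q := by
  rw [bitGadget_congr hz, truncParityPolytope_eq]
  refine subset_convexHull ℝ _ ⟨bitGadget_zero_or_one hx (flippedBit_zero_or_one s),
    2 ^ q * (s / 2 ^ q + 2) - 1 + (s.testBit q).toNat, ?_,
    (odd_div_two_pow_iff_s18 (Bool.toNat_le _)).2 (Nat.toNat_testBit s q)⟩
  rw [sum_bitGadget_of_eq_flippedBit hs fun _ _ => rfl, flippedBit]
  push_cast
  ring

theorem eq_flippedBit_of_bitGadget_mem (hx : ∀ i, x i = 0 ∨ x i = 1) (hs : ∑ i, x i = s)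
    (hz : ∀ i < q, z i = flippedBit s i)
    (hmem : bitGadget n q x z ∈ truncParityPolytope (n + 2 ^ (q + 1)) q) :
    z q = flippedBit s q := by
  rw [truncParityPolytope_eq] at hmem
  set L := gadgetLast n q
  set u := bitGadget n q x (flippedBit s)
  have huL : u L = 1 - flippedBit s q := bitGadget_gadgetLast
  -- parity count: of the two 0/1 completions of `u` off `L`, only `u` is a vertex
  have hVu : ∀ v ∈ truncParityVertices _ q, (∀ j ≠ L, v j = u j) → v L = u L := by
    rintro v ⟨hv, s', hs', hodd⟩ hvu
    obtain ⟨e, he, hvL⟩ : ∃ e : ℕ, e ≤ 1 ∧ v L = e := by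
      rcases hv L with h | h
      · exact ⟨0, zero_le_one, by simp [h]⟩
      · exact ⟨1, le_rfl, by simp [h]⟩
    have hsum : (s' : ℝ) = ((2 ^ q * (s / 2 ^ q + 2) - 1 + e : ℕ) : ℝ) := by
      have hu := add_sum_erase univ u (mem_univ L)
      rw [sum_bitGadget_of_eq_flippedBit hs fun _ _ => rfl, huL] at hu
      rw [← hs', ← add_sum_erase univ v (mem_univ L),
        sum_congr rfl fun j hj => hvu j (ne_of_mem_erase hj), hvL]
      push_cast
      linarith
    rw [Nat.cast_inj.1 hsum, odd_div_two_pow_iff_s18 he, ← Nat.toNat_testBit] at hodd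
    rw [hvL, hodd, huL, flippedBit, sub_sub_cancel]
  have hL := apply_eq_of_mem_convexHull (fun v hv => hv.1)
    (bitGadget_zero_or_one hx (flippedBit_zero_or_one s)) L hVu hmem
    fun j hj => bitGadget_congr_of_ne hz hj
  rwa [bitGadget_gadgetLast, bitGadget_gadgetLast, sub_right_inj] at hL

end TruncParityPolytope

section ExGate

theorem and_gate_iff {ι : Type*} [Fintype ι] (P : ι → Prop) [DecidablePred P] {y : ℝ} :
    ((∑ k, if P k then (1 : ℝ) else 0) - Fintype.card ι + 1 ≤ y ∧
        (∀ k, y ≤ if P k then 1 else 0) ∧ 0 ≤ y ∧ y ≤ 1) ↔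
      y = if ∀ k, P k then 1 else 0 := by
  by_cases hP : ∀ k, P k
  · have hsum : (∑ k, if P k then (1 : ℝ) else 0) = Fintype.card ι := by simp [hP]
    rw [if_pos hP, hsum, sub_self, zero_add]
    constructor
    · rintro ⟨h1, -, -, h2⟩
      exact le_antisymm h2 h1
    · rintro rfl
      simp [hP]
  · obtain ⟨K, hK⟩ := not_forall.1 hP
    have hcard : (∑ k, if P k then (1 : ℝ) else 0) ≤ Fintype.card ι - 1 := by
      rw [sum_boole, ← card_univ, le_sub_iff_add_le, ← Nat.cast_add_one, Nat.cast_le]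
      exact card_lt_card (filter_ssubset.2 ⟨K, mem_univ K, hK⟩)
    simp only [hP, if_false]
    constructor
    · rintro ⟨-, hy, h0, -⟩
      exact le_antisymm (by simpa [hK] using hy K) h0
    · rintro rfl
      refine ⟨by linarith, fun k => ?_, le_rfl, zero_le_one⟩
      split_ifs <;> norm_num

theorem forall_testBit_eq_iff {m s t : ℕ} (hs : s < 2 ^ m) (ht : t < 2 ^ m) :
    (∀ k : Fin m, s.testBit k = t.testBit k) ↔ s = t := by
  refine ⟨fun h => Nat.eq_of_testBit_eq fun i => ?_, fun h _ => h ▸ rfl⟩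
  by_cases hi : i < m
  · exact h ⟨i, hi⟩
  · have hpow := Nat.pow_le_pow_right two_pos (not_lt.1 hi)
    rw [Nat.testBit_lt_two_pow (hs.trans_le hpow), Nat.testBit_lt_two_pow (ht.trans_le hpow)]

variable {n t s : ℕ} {x : Fin n → ℝ} {y : ℝ} {z : Fin (Nat.size n) → ℝ}

theorem ExGateCond.eq_flippedBit (hx : ∀ i, x i = 0 ∨ x i = 1) (hs : ∑ i, x i = s)
    (h : ExGateCond n t x y z) (k : Fin (Nat.size n)) : z k = flippedBit s k := by
  have hext : ∀ q < Nat.size n,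
      (fun i => if h : i < Nat.size n then z ⟨i, h⟩ else 0) q = flippedBit s q := by
    intro q
    induction q using Nat.strong_induction_on with
    | _ q ih =>
      exact fun hq => eq_flippedBit_of_bitGadget_mem hx hs
        (fun i hi => ih i hi (hi.trans hq)) (h.1 q hq)
  simpa using hext k k.isLt

theorem exGateCond_iff (hx : ∀ i, x i = 0 ∨ x i = 1) (hs : ∑ i, x i = s)
    (hsn : s < 2 ^ Nat.size n) (htn : t < 2 ^ Nat.size n) :
    ExGateCond n t x y z ↔ (∀ k, z k = flippedBit s k) ∧ y = if s = t then 1 else 0 := by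
  have hgate : (∀ k, z k = flippedBit s k) →
      (((∑ k : Fin (Nat.size n), if t.testBit k then 1 - z k else z k) - Nat.size n + 1 ≤ y ∧
        (∀ k : Fin (Nat.size n), ¬ t.testBit k → y ≤ z k) ∧
        (∀ k : Fin (Nat.size n), t.testBit k → y ≤ 1 - z k) ∧ 0 ≤ y ∧ y ≤ 1) ↔
      y = if s = t then 1 else 0) := by
    intro hz
    have hcomp : ∀ k : Fin (Nat.size n), (if t.testBit k then 1 - z k else z k) =
        if s.testBit k = t.testBit k then 1 else 0 := fun k => by
      rw [hz, flippedBit]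
      cases s.testBit k <;> cases t.testBit k <;> norm_num
    have hle : ∀ k : Fin (Nat.size n), ((¬ t.testBit k → y ≤ z k) ∧ (t.testBit k → y ≤ 1 - z k)) ↔
        y ≤ if s.testBit k = t.testBit k then 1 else 0 := fun k => by
      rw [← hcomp]
      cases t.testBit k <;> simp
    refine Iff.trans ?_
      ((and_gate_iff (y := y) fun k : Fin (Nat.size n) => s.testBit k = t.testBit k).trans ?_)
    · simp only [← hle, forall_and, hcomp, and_assoc, Fintype.card_fin]
    · simp only [forall_testBit_eq_iff hsn htn]
  constructor
  · intro h
    have hz := h.eq_flippedBit hx hs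
    exact ⟨hz, (hgate hz).1 h.2⟩
  · rintro ⟨hz, hy⟩
    exact ⟨fun q hq => bitGadget_mem_truncParityPolytope hx hs fun i hi => by
      simp [hi.trans_lt hq, hz], (hgate hz).2 hy⟩

end ExGate

theorem exists_sum_eq_natCast_le {n : ℕ} {x : Fin n → ℝ} (hx : ∀ i, x i = 0 ∨ x i = 1) :
    ∃ s : ℕ, ∑ i, x i = s ∧ s ≤ n := by
  classical
  refine ⟨#{i | x i = 1}, ?_, (card_filter_le _ _).trans_eq (card_fin n)⟩
  rw [← sum_boole]
  exact sum_congr rfl fun i _ => by rcases hx i with h | h <;> simp [h]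

theorem statement18_general (n t : ℕ) (ht : t ≤ n)
    (x : Fin n → ℝ) (hx : ∀ i, x i = 0 ∨ x i = 1) :
    (∃! y : ℝ, ∃ z : Fin (Nat.size n) → ℝ, ExGateCond n t x y z) ∧
    ∀ y : ℝ, (∃ z : Fin (Nat.size n) → ℝ, ExGateCond n t x y z) →
      ((∑ i, x i) = (t : ℝ) → y = 1) ∧ ((∑ i, x i) ≠ (t : ℝ) → y = 0) := by
  obtain ⟨s, hs, hsn⟩ := exists_sum_eq_natCast_le hx
  have hiff {y z} := exGateCond_iff (y := y) (z := z) hx hs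
    (hsn.trans_lt n.lt_size_self) (ht.trans_lt n.lt_size_self)
  have hst : (∑ i, x i = t) ↔ s = t := by rw [hs, Nat.cast_inj]
  refine ⟨⟨if s = t then 1 else 0, ⟨fun k => flippedBit s k, hiff.2 ⟨fun _ => rfl, rfl⟩⟩,
    fun y ⟨_, h⟩ => (hiff.1 h).2⟩, fun y ⟨_, h⟩ => ?_⟩
  rw [(hiff.1 h).2, ne_eq, hst]
  exact ⟨fun h => if_pos h, fun h => if_neg h⟩

/-- for `n ≥ 1`, `m = |n|`, `0 ≤ t ≤ n` and bits `x_1,…,x_n ∈ {0,1}`,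
there is a unique `y ∈ ℝ` for which there exist `z_1,…,z_m ∈ ℝ` satisfying the
`EX_{n,t}` gate constraints; moreover `y = 1` if `Σ x_i = t` and `y = 0` otherwise. -/
theorem statement18 (n t : ℕ) (hn : 1 ≤ n) (ht : t ≤ n)
    (x : Fin n → ℝ) (hx : ∀ i, x i = 0 ∨ x i = 1) :
    (∃! y : ℝ, ∃ z : Fin (Nat.size n) → ℝ, ExGateCond n t x y z) ∧
    ∀ y : ℝ, (∃ z : Fin (Nat.size n) → ℝ, ExGateCond n t x y z) →
      ((∑ i, x i) = (t : ℝ) → y = 1) ∧ ((∑ i, x i) ≠ (t : ℝ) → y = 0) :=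
  statement18_general n t ht x hx
end
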